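/- arXiv:2402.03958 — 10 statements merged into one kernel-verified Lean document; each statement's English description precedes it below -/
import Mathlib

section
/- (Proposition 2) Assume B is bounded, strictly positive (B(x) > 0 for all x ≥ 0), and that Hypothesis 2.1 holds. Then (S*, 0) is globally attracting for the disease-free system (9) on Ω = {(S,R) ∈ ℝ²₊ : S > 0}: every solution of (9) with S(0) > 0 and R(0) ≥ 0 satisfies lim_{t→∞}(S(t), R(t)) = (S*, 0). -/
/-!
The `R` component decays geometrically, so `S` is an asymptotic orbit of the scalar map
`Σ x = B x + σS * x`: `S (t + 1) - Σ (S t) → 0`. Positivity and boundedness of `B` trap `S`,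
from time `1` on, in a compact interval `K ⊂ (0, ∞)` mapped into itself by `Σ`. Since `S*` is
hyperbolic, `Σ` contracts a small ball around `S*`; by compactness a single iterate `Σ^N` sends
all of `K` into half of that ball, while `S (t + N)` shadows `Σ^N (S t)` as `t → ∞`. Hence `S`
eventually enters the ball, where the contraction absorbs the vanishing perturbation.
-/

open Filter Topology Set Function Metric

theorem HasDerivAt.eventually_norm_sub_le {𝕜 F : Type*} [NontriviallyNormedField 𝕜]
    [NormedAddCommGroup F] [NormedSpace 𝕜 F] {f : 𝕜 → F} {f' : F} {x : 𝕜} {c : ℝ}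
    (hf : HasDerivAt f f' x) (hc : ‖f'‖ < c) :
    ∀ᶠ y in 𝓝 x, ‖f y - f x‖ ≤ c * ‖y - x‖ := by
  filter_upwards [hf.isLittleO.def (sub_pos.2 hc)] with y hy
  calc ‖f y - f x‖ ≤ ‖f y - f x - (y - x) • f'‖ + ‖(y - x) • f'‖ :=
        (norm_le_insert' _ _).trans_eq (add_comm _ _)
    _ ≤ (c - ‖f'‖) * ‖y - x‖ + ‖y - x‖ * ‖f'‖ := add_le_add hy (norm_smul_le _ _)
    _ = c * ‖y - x‖ := by ring

theorem UniformContinuousOn.tendsto_dist_comp {α β ι : Type*} [PseudoMetricSpace α]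
    [PseudoMetricSpace β] {l : Filter ι} {f : α → β} {s : Set α}
    (hf : UniformContinuousOn f s)
    {a b : ι → α} (ha : ∀ᶠ i in l, a i ∈ s) (hb : ∀ᶠ i in l, b i ∈ s)
    (hab : Tendsto (fun i => dist (a i) (b i)) l (𝓝 0)) :
    Tendsto (fun i => dist (f (a i)) (f (b i))) l (𝓝 0) := by
  rw [← tendsto_uniformity_iff_dist_tendsto_zero (f := fun i => (a i, b i))] at hab
  exact tendsto_uniformity_iff_dist_tendsto_zero.1 <|
    Tendsto.comp hf (tendsto_inf.2 ⟨hab, tendsto_principal.2 (ha.and hb)⟩)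

theorem tendsto_zero_of_le_mul_add {d e : ℕ → ℝ} {c : ℝ} (hc0 : 0 ≤ c) (hc1 : c < 1)
    (hd : ∀ t, 0 ≤ d t) (hrec : ∀ᶠ t in atTop, d (t + 1) ≤ c * d t + e t)
    (he : Tendsto e atTop (𝓝 0)) : Tendsto d atTop (𝓝 0) := by
  refine tendsto_order.2 ⟨fun a ha => Eventually.of_forall fun t => ha.trans_le (hd t),
    fun ε hε => ?_⟩
  set η := (1 - c) * (ε / 2)
  have hη : 0 < η := mul_pos (sub_pos.2 hc1) (half_pos hε)
  obtain ⟨T, hT⟩ := eventually_atTop.1 (hrec.and (he.eventually (gt_mem_nhds hη)))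
  -- compare with the sequence `u (k + 1) = c * u k + η`, which tends to `η / (1 - c) = ε / 2`
  have hcomp : ∀ k, d (k + T) ≤ arithGeom c η (d T) k := by
    intro k
    induction k with
    | zero => simp
    | succ k ih =>
      obtain ⟨hrec, he⟩ := hT (k + T) (Nat.le_add_left _ _)
      rw [arithGeom_succ, Nat.add_right_comm]
      calc d (k + T + 1) ≤ c * d (k + T) + e (k + T) := hrec
        _ ≤ c * arithGeom c η (d T) k + η := by gcongr
  have hlim : η / (1 - c) < ε := by
    rw [mul_div_cancel_left₀ _ (sub_pos.2 hc1).ne']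
    exact half_lt_self hε
  rw [← map_add_atTop_eq_nat T, eventually_map]
  filter_upwards [(tendsto_arithGeom_nhds_of_lt_one hc0 hc1).eventually (gt_mem_nhds hlim)]
    with k hk
  exact (hcomp k).trans_lt hk

section Iterate

variable {X : Type*} {F : X → X} {K U : Set X}

theorem IsCompact.eventually_forall_iterate_mem [TopologicalSpace X] {p : X}
    (hK : IsCompact K) (hFK : MapsTo F K K) (hF : ContinuousOn F K)
    (hattr : ∀ x ∈ K, Tendsto (fun n => F^[n] x) atTop (𝓝 p))
    (hU : IsOpen U) (hpU : p ∈ U) (hFU : MapsTo F U U) :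
    ∀ᶠ N in atTop, ∀ y ∈ K, F^[N] y ∈ U := by
  refine hK.induction_on (p := fun t => ∀ᶠ N in atTop, ∀ y ∈ t, F^[N] y ∈ U) (by simp)
    (fun s t hst ht => ht.mono fun N hN y hy => hN y (hst hy))
    (fun s t hs ht => ?_) fun x hx => ?_
  · filter_upwards [hs, ht] with N hs ht y hy
    exact hy.elim (hs y) (ht y)
  · obtain ⟨n, hn⟩ := ((hattr x hx).eventually (hU.mem_nhds hpU)).exists
    refine ⟨F^[n] ⁻¹' U,
      (hF.iterate hFK n x hx).preimage_mem_nhdsWithin (hU.mem_nhds hn), ?_⟩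
    filter_upwards [eventually_ge_atTop n] with N hN y hy
    rw [← Nat.sub_add_cancel hN, iterate_add_apply]
    exact hFU.iterate (N - n) hy

variable [PseudoMetricSpace X]

theorem IsCompact.tendsto_dist_add_iterate (hK : IsCompact K) (hFK : MapsTo F K K)
    (hF : ContinuousOn F K) {s : ℕ → X} (hsK : ∀ᶠ t in atTop, s t ∈ K)
    (hs : Tendsto (fun t => dist (s (t + 1)) (F (s t))) atTop (𝓝 0)) (k : ℕ) :
    Tendsto (fun t => dist (s (t + k)) (F^[k] (s t))) atTop (𝓝 0) := by
  induction k with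
  | zero => simp
  | succ k ih =>
    have hstep := hs.comp (tendsto_add_atTop_nat k)
    have hsK' : ∀ᶠ t in atTop, s (t + k) ∈ K := tendsto_add_atTop_nat k |>.eventually hsK
    have hunif := (hK.uniformContinuousOn_of_continuous hF).tendsto_dist_comp hsK'
      (hsK.mono fun t ht => hFK.iterate k ht) ih
    refine squeeze_zero (fun t => dist_nonneg) (fun t => ?_) (by simpa using hstep.add hunif)
    rw [iterate_succ_apply', ← add_assoc]
    exact dist_triangle _ _ _

theorem tendsto_of_asymptotic_orbit {p : X} {c : ℝ} {s : ℕ → X} (hK : IsCompact K)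
    (hFK : MapsTo F K K) (hF : ContinuousOn F K)
    (hattr : ∀ x ∈ K, Tendsto (fun n => F^[n] x) atTop (𝓝 p))
    (hc0 : 0 ≤ c) (hc1 : c < 1) (hcontr : ∀ᶠ x in 𝓝 p, dist (F x) p ≤ c * dist x p)
    (hsK : ∀ᶠ t in atTop, s t ∈ K)
    (hs : Tendsto (fun t => dist (s (t + 1)) (F (s t))) atTop (𝓝 0)) :
    Tendsto s atTop (𝓝 p) := by
  obtain ⟨δ, hδ, hcontr⟩ := eventually_nhds_iff_ball.1 hcontr
  have hδ2 := half_pos hδ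
  have hball : MapsTo F (ball p (δ / 2)) (ball p (δ / 2)) := fun x hx =>
    ((hcontr x (ball_subset_ball (half_le_self hδ.le) hx)).trans
      (mul_le_of_le_one_left dist_nonneg hc1.le)).trans_lt hx
  obtain ⟨N, hN⟩ := (hK.eventually_forall_iterate_mem hFK hF hattr isOpen_ball
    (mem_ball_self hδ2) hball).exists
  have hnear : ∀ᶠ t in atTop, s t ∈ ball p δ := by
    rw [← map_add_atTop_eq_nat N, eventually_map]
    filter_upwards [hsK, (hK.tendsto_dist_add_iterate hFK hF hsK hs N).eventually
      (gt_mem_nhds hδ2)] with t htK ht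
    calc dist (s (t + N)) p ≤ dist (s (t + N)) (F^[N] (s t)) + dist (F^[N] (s t)) p :=
          dist_triangle _ _ _
      _ < δ / 2 + δ / 2 := add_lt_add ht (hN _ htK)
      _ = δ := add_halves δ
  refine tendsto_iff_dist_tendsto_zero.2 <|
    tendsto_zero_of_le_mul_add hc0 hc1 (fun t => dist_nonneg) ?_ hs
  filter_upwards [hnear] with t ht
  linarith [dist_triangle (s (t + 1)) (F (s t)) p, hcontr _ ht]

end Iterate

theorem tendsto_zero_and_mem_Icc_of_succ_eq_mul {q : ℝ} {R : ℕ → ℝ} (hq0 : 0 ≤ q)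
    (hq1 : q < 1) (hR0 : 0 ≤ R 0) (hR : ∀ t, R (t + 1) = q * R t) :
    Tendsto R atTop (𝓝 0) ∧ ∀ t, R t ∈ Icc 0 (R 0) := by
  have hpow : ∀ t, R t = q ^ t * R 0 := fun t => by
    induction t with
    | zero => simp
    | succ t ih => rw [hR, ih, pow_succ', mul_assoc]
  refine ⟨?_, fun t => ?_⟩
  · simpa [← funext hpow] using (tendsto_pow_atTop_nhds_zero_of_lt_one hq0 hq1).mul_const (R 0)
  · rw [hpow t]
    exact ⟨mul_nonneg (pow_nonneg hq0 t) hR0,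
      mul_le_of_le_one_left hR0 (pow_le_one₀ hq0 hq1.le)⟩

section DiseaseFree

variable {B : ℝ → ℝ} {σ a ρ Bhat M : ℝ} {S R : ℕ → ℝ}

theorem disease_free_mem_Icc (hσ : 0 ≤ σ) (ha : 0 ≤ a)
    (hBpos : ∀ x ∈ Ici (0:ℝ), 0 < B x) (hBbd : ∀ x ∈ Ici (0:ℝ), B x ≤ Bhat)
    (hR : ∀ t, R t ∈ Icc 0 ρ) (hS0 : 0 ≤ S 0) (hM0 : S 0 ≤ M)
    (hM : Bhat + a * ρ + σ * M ≤ M)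
    (hdyn : ∀ t, S (t + 1) = B (S t + R t) + a * R t + σ * S t) (t : ℕ) :
    S t ∈ Icc 0 M := by
  induction t with
  | zero => exact ⟨hS0, hM0⟩
  | succ t ih =>
    have hSR : S t + R t ∈ Ici 0 := add_nonneg ih.1 (hR t).1
    rw [hdyn]
    constructor
    · linarith [hBpos _ hSR, mul_nonneg ha (hR t).1, mul_nonneg hσ ih.1]
    · nlinarith [hBbd _ hSR, mul_le_mul_of_nonneg_left (hR t).2 ha,
        mul_le_mul_of_nonneg_left ih.2 hσ]

theorem disease_free_exists_isCompact_mapsTo (hσ0 : 0 ≤ σ) (hσ1 : σ < 1) (ha : 0 ≤ a)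
    (hBc : ContinuousOn B (Ici 0))
    (hBpos : ∀ x ∈ Ici (0:ℝ), 0 < B x) (hBbd : ∀ x ∈ Ici (0:ℝ), B x ≤ Bhat)
    (hR : ∀ t, R t ∈ Icc 0 ρ) (hS0 : 0 ≤ S 0)
    (hdyn : ∀ t, S (t + 1) = B (S t + R t) + a * R t + σ * S t) :
    ∃ M, (∀ t, S t ∈ Icc 0 M) ∧ ∃ K ⊆ Ioi 0, IsCompact K ∧
      MapsTo (fun x => B x + σ * x) K K ∧ ∀ᶠ t in atTop, S t ∈ K := by
  set M := max (S 0) ((Bhat + a * ρ) / (1 - σ))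
  have hM : Bhat + a * ρ + σ * M ≤ M := by
    have := (div_le_iff₀ (sub_pos.2 hσ1)).1 (le_max_right (S 0) ((Bhat + a * ρ) / (1 - σ)))
    linarith
  have hS := disease_free_mem_Icc hσ0 ha hBpos hBbd hR hS0 (le_max_left _ _) hM hdyn
  have hρ : 0 ≤ ρ := (hR 0).1.trans (hR 0).2
  -- `K` starts at `min B` over `[0, M + ρ]`, which bounds `Σ` on `K` and `S (t + 1)` from below
  obtain ⟨x₀, hx₀, hmin⟩ := isCompact_Icc.exists_isMinOn
    (nonempty_Icc.2 (add_nonneg ((hS 0).1.trans (hS 0).2) hρ)) (hBc.mono Icc_subset_Ici_self)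
  refine ⟨M, hS, Icc (B x₀) M, fun x hx => (hBpos x₀ hx₀.1).trans_le hx.1, isCompact_Icc,
    fun x hx => ?_, ?_⟩
  · have hx0 : 0 ≤ x := (hBpos x₀ hx₀.1).le.trans hx.1
    have : B x₀ ≤ B x := hmin ⟨hx0, by linarith [hx.2]⟩
    constructor <;> nlinarith [hBbd x hx0, mul_le_mul_of_nonneg_left hx.2 hσ0]
  · rw [← map_add_atTop_eq_nat 1, eventually_map]
    refine Eventually.of_forall fun t => ⟨?_, (hS (t + 1)).2⟩
    have : B x₀ ≤ B (S t + R t) :=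
      hmin ⟨add_nonneg (hS t).1 (hR t).1, add_le_add (hS t).2 (hR t).2⟩
    rw [hdyn]
    nlinarith [(hS t).1, (hR t).1]

theorem disease_free_tendsto_dist_succ (hBc : ContinuousOn B (Ici 0))
    (hS : ∀ t, S t ∈ Icc 0 M) (hR : ∀ t, R t ∈ Icc 0 ρ) (hRlim : Tendsto R atTop (𝓝 0))
    (hdyn : ∀ t, S (t + 1) = B (S t + R t) + a * R t + σ * S t) :
    Tendsto (fun t => dist (S (t + 1)) (B (S t) + σ * S t)) atTop (𝓝 0) := by
  have hSR : ∀ t, S t + R t ∈ Icc 0 (M + ρ) := fun t =>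
    ⟨add_nonneg (hS t).1 (hR t).1, add_le_add (hS t).2 (hR t).2⟩
  have hS' : ∀ t, S t ∈ Icc 0 (M + ρ) := fun t =>
    ⟨(hS t).1, (hS t).2.trans (le_add_of_nonneg_right ((hR t).1.trans (hR t).2))⟩
  have hB := (isCompact_Icc.uniformContinuousOn_of_continuous
    (hBc.mono Icc_subset_Ici_self)).tendsto_dist_comp (Eventually.of_forall hSR)
    (Eventually.of_forall hS') (by simpa [Real.dist_eq] using hRlim.abs)
  refine squeeze_zero (fun t => dist_nonneg) (fun t => ?_)
    (by simpa using hB.add (hRlim.const_mul a).abs)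
  rw [hdyn, Real.dist_eq, Real.dist_eq]
  calc |B (S t + R t) + a * R t + σ * S t - (B (S t) + σ * S t)|
      = |(B (S t + R t) - B (S t)) + a * R t| := by congr 1; ring
    _ ≤ |B (S t + R t) - B (S t)| + |a| * |R t| :=
      (abs_add_le _ _).trans_eq (by rw [abs_mul])

end DiseaseFree

theorem disease_free_system_GAS_general
    (σS σR γR : ℝ)
    (hσS : σS ∈ Set.Ioo (0:ℝ) 1) (hσR : σR ∈ Set.Ioo (0:ℝ) 1)
    (hγR : γR ∈ Set.Ioo (0:ℝ) 1)
    (B : ℝ → ℝ)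
    (hBC1 : ContDiffOn ℝ 1 B (Set.Ici (0:ℝ)))
    (hBpos : ∀ x ∈ Set.Ici (0:ℝ), 0 < B x)
    (Bhat : ℝ) (hBbd : ∀ x ∈ Set.Ici (0:ℝ), B x ≤ Bhat)
    -- Hypothesis 2.1 for the scalar map Σ(S) = B(S) + σS·S :
    (Sstar : ℝ)
    (hfix : B Sstar + σS * Sstar = Sstar)
    (B' : ℝ) (hB' : HasDerivAt B B' Sstar) (hhyperbolic : |B' + σS| < 1)
    (hscalarGAS : ∀ S0, 0 < S0 →
      Filter.Tendsto (fun t => (fun s => B s + σS * s)^[t] S0) Filter.atTop (nhds Sstar))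
    -- a solution of the disease-free system (9):
    (S R : ℕ → ℝ) (hS0 : 0 < S 0) (hR0 : 0 ≤ R 0)
    (hdynS : ∀ t, S (t+1) = B (S t + R t) + σS * γR * R t + σS * S t)
    (hdynR : ∀ t, R (t+1) = σR * (1 - γR) * R t) :
    Filter.Tendsto S Filter.atTop (nhds Sstar) ∧
    Filter.Tendsto R Filter.atTop (nhds 0) := by
  obtain ⟨hσS0, hσS1⟩ := hσS
  obtain ⟨hRlim, hR⟩ := tendsto_zero_and_mem_Icc_of_succ_eq_mul
    (mul_nonneg hσR.1.le (sub_nonneg.2 hγR.2.le))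
    (mul_lt_one_of_nonneg_of_lt_one_left hσR.1.le hσR.2 (by linarith [hγR.1])) hR0 hdynR
  have hBc := hBC1.continuousOn
  obtain ⟨M, hSM, K, hKpos, hK, hmapsK, hSK⟩ := disease_free_exists_isCompact_mapsTo hσS0.le
    hσS1 (mul_nonneg hσS0.le hγR.1.le) hBc hBpos hBbd hR hS0.le hdynS
  have hcont : ContinuousOn (fun x => B x + σS * x) K :=
    (hBc.mono fun x hx => mem_Ici.2 (hKpos hx).le).add (continuousOn_const.mul continuousOn_id)
  have hcontr : ∀ᶠ x in 𝓝 Sstar,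
      dist (B x + σS * x) Sstar ≤ (|B' + σS| + 1) / 2 * dist x Sstar := by
    have hderiv := hB'.add ((hasDerivAt_id' Sstar).const_mul σS)
    rw [mul_one] at hderiv
    simpa only [Pi.add_apply, hfix, Real.dist_eq, Real.norm_eq_abs] using
      hderiv.eventually_norm_sub_le (c := (|B' + σS| + 1) / 2)
        (by rw [Real.norm_eq_abs]; linarith)
  exact ⟨tendsto_of_asymptotic_orbit hK hmapsK hcont (fun x hx => hscalarGAS x (hKpos hx))
    (by positivity) (by linarith) hcontr hSK
    (disease_free_tendsto_dist_succ hBc hSM hR hRlim hdynS), hRlim⟩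

/-- Proposition 2: under Hypothesis 2.1, with `B` bounded and strictly
positive, the equilibrium `(S*, 0)` of the disease-free system (9) attracts every
solution with `S(0) > 0`, `R(0) ≥ 0`. -/
theorem disease_free_system_GAS
    (σS σR γR : ℝ)
    (hσS : σS ∈ Set.Ioo (0:ℝ) 1) (hσR : σR ∈ Set.Ioo (0:ℝ) 1)
    (hγR : γR ∈ Set.Ioo (0:ℝ) 1)
    (B : ℝ → ℝ)
    (hBC1 : ContDiffOn ℝ 1 B (Set.Ici (0:ℝ)))
    (hBpos : ∀ x ∈ Set.Ici (0:ℝ), 0 < B x)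
    (Bhat : ℝ) (hBbd : ∀ x ∈ Set.Ici (0:ℝ), B x ≤ Bhat)
    -- Hypothesis 2.1 for the scalar map Σ(S) = B(S) + σS·S :
    (Sstar : ℝ) (hSstar_pos : 0 < Sstar)
    (hfix : B Sstar + σS * Sstar = Sstar)
    (huniq : ∀ x, 0 < x → B x + σS * x = x → x = Sstar)
    (B' : ℝ) (hB' : HasDerivAt B B' Sstar) (hhyperbolic : |B' + σS| < 1)
    (hscalarGAS : ∀ S0, 0 < S0 →
      Filter.Tendsto (fun t => (fun s => B s + σS * s)^[t] S0) Filter.atTop (nhds Sstar))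
    -- a solution of the disease-free system (9):
    (S R : ℕ → ℝ) (hS0 : 0 < S 0) (hR0 : 0 ≤ R 0)
    (hdynS : ∀ t, S (t+1) = B (S t + R t) + σS * γR * R t + σS * S t)
    (hdynR : ∀ t, R (t+1) = σR * (1 - γR) * R t) :
    Filter.Tendsto S Filter.atTop (nhds Sstar) ∧
    Filter.Tendsto R Filter.atTop (nhds 0) :=
  disease_free_system_GAS_general σS σR γR hσS hσR hγR B hBC1 hBpos Bhat hBbd Sstar hfix B' hB'
    hhyperbolic hscalarGAS S R hS0 hR0 hdynS hdynR
end

section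
/- Let σ^E, σ^I, γ^E, γ^I ∈ (0,1) and φ ≥ 0. Consider the 2×2 real matrices F = [[0, σ^E φ],[0, 0]] and T = [[σ^E(1−γ^E), 0],[σ^I γ^E, σ^I(1−γ^I)]]. Then Id − T is invertible and the spectral radius of the next-generation matrix Q = F(Id − T)^{-1} equals σ^E σ^I γ^E φ / ((1 − σ^E(1−γ^E))(1 − σ^I(1−γ^I))). -/
open scoped ENNReal

/-!
`1 - T` is lower triangular with positive diagonal, so it is invertible with a lower triangular
inverse. Since `F` only has an upper-right entry, `Q = F (1 - T)⁻¹` has zero second row: it is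
upper triangular with diagonal `(R₀, 0)`, so its spectrum is `{R₀, 0}` and its spectral radius
is `R₀ ≥ 0`.
-/

namespace Matrix

theorem spectrum_upperTriangular_fin_two {K : Type*} [Field K] (a b d : K) :
    spectrum K !![a, b; 0, d] = {a, d} := by
  ext z
  rw [spectrum.mem_iff, isUnit_iff_isUnit_det, isUnit_iff_ne_zero, not_not, det_fin_two]
  simp [algebraMap_matrix_apply, sub_eq_zero, eq_comm]

theorem spectralRadius_upperTriangular_fin_two {𝕜 : Type*} [NormedField 𝕜] (a b d : 𝕜) :
    spectralRadius 𝕜 !![a, b; 0, d] = max ‖a‖₊ ‖d‖₊ := by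
  rw [spectralRadius, spectrum_upperTriangular_fin_two, iSup_pair]
  simp

theorem spectralRadius_complex_upperTriangular_fin_two {a d : ℝ} (ha : 0 ≤ a) (hd : 0 ≤ d)
    (b : ℝ) :
    spectralRadius ℂ ((!![a, b; 0, d] : Matrix (Fin 2) (Fin 2) ℝ).map (algebraMap ℝ ℂ)) =
      ENNReal.ofReal (max a d) := by
  have hmap : (!![a, b; 0, d] : Matrix (Fin 2) (Fin 2) ℝ).map (algebraMap ℝ ℂ) =
      !![(a : ℂ), b; 0, d] := by
    ext i j; fin_cases i <;> fin_cases j <;> simp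
  rw [hmap, spectralRadius_upperTriangular_fin_two, ENNReal.ofReal_max]
  simp [← Real.enorm_eq_ofReal, ha, hd]
  rfl

theorem inv_lowerTriangular_fin_two {K : Type*} [Field K] {p q : K} (hp : p ≠ 0) (hq : q ≠ 0)
    (c : K) : !![p, 0; c, q]⁻¹ = !![p⁻¹, 0; -(c / (p * q)), q⁻¹] := by
  apply inv_eq_right_inv
  rw [mul_fin_two, one_fin_two]
  simp [hp, hq]
  field_simp
  ring

end Matrix

open Matrix in
/-- the next-generation matrix `Q = F (Id - T)⁻¹` is well defined
(`Id - T` is invertible) and its spectral radius is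
`σE σI γE φ / ((1 - σE(1-γE))(1 - σI(1-γI)))`, the basic reproduction number (10). -/
theorem next_generation_spectral_radius
    (σE σI γE γI φ : ℝ)
    (hσE : σE ∈ Set.Ioo (0:ℝ) 1) (hσI : σI ∈ Set.Ioo (0:ℝ) 1)
    (hγE : γE ∈ Set.Ioo (0:ℝ) 1) (hγI : γI ∈ Set.Ioo (0:ℝ) 1)
    (hφ : 0 ≤ φ)
    (F T : Matrix (Fin 2) (Fin 2) ℝ)
    (hF : F = Matrix.of ![![0, σE * φ], ![0, 0]])
    (hT : T = Matrix.of ![![σE * (1 - γE), 0], ![σI * γE, σI * (1 - γI)]]) :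
    IsUnit (1 - T) ∧
    spectralRadius ℂ ((F * (1 - T)⁻¹).map (algebraMap ℝ ℂ)) =
      ENNReal.ofReal (σE * σI * γE * φ /
        ((1 - σE * (1 - γE)) * (1 - σI * (1 - γI)))) := by
  obtain ⟨hσE₀, hσE₁⟩ := hσE
  obtain ⟨hσI₀, hσI₁⟩ := hσI
  obtain ⟨hγE₀, hγE₁⟩ := hγE
  obtain ⟨hγI₀, hγI₁⟩ := hγI
  set d₁ := 1 - σE * (1 - γE)
  set d₂ := 1 - σI * (1 - γI)
  have hd₁ : 0 < d₁ := by nlinarith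
  have hd₂ : 0 < d₂ := by nlinarith
  have hIT : 1 - T = !![d₁, 0; -(σI * γE), d₂] := by
    rw [hT, one_fin_two]
    ext i j; fin_cases i <;> fin_cases j <;> simp [d₁, d₂]
  have hQ : F * (1 - T)⁻¹ = !![σE * σI * γE * φ / (d₁ * d₂), σE * φ / d₂; 0, 0] := by
    rw [hIT, inv_lowerTriangular_fin_two hd₁.ne' hd₂.ne', hF, mul_fin_two]
    ext i j
    fin_cases i <;> fin_cases j <;> simp <;> ring
  refine ⟨?_, ?_⟩
  · rw [hIT, isUnit_iff_isUnit_det, det_fin_two_of, isUnit_iff_ne_zero, zero_mul,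
      sub_zero]
    positivity
  · rw [hQ, spectralRadius_complex_upperTriangular_fin_two (by positivity) le_rfl,
      max_eq_left (by positivity)]
end

section
/- Let σ^E, σ^I, γ^E, γ^I ∈ (0,1) and φ ≥ 0, and let F = [[0, σ^E φ],[0, 0]], T = [[σ^E(1−γ^E), 0],[σ^I γ^E, σ^I(1−γ^I)]], and R₀ = σ^E σ^I γ^E φ / ((1 − σ^E(1−γ^E))(1 − σ^I(1−γ^I))). Then the spectral radius of T is less than 1, and the spectral radius of F + T is < 1 if and only if R₀ < 1, and is > 1 if and only if R₀ > 1. -/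
/-!
When `b c ≥ 0` the eigenvalues of `!![a, b; c, d]` are real, and when moreover `a + d ≥ 0` the
spectral radius is the larger one, `p = (a + d + √((a - d)² + 4 b c)) / 2`. If `a + d < 2`, then
`p < 1` exactly when the characteristic polynomial is positive at `1`, i.e. `b c < (1 - a)(1 - d)`,
and for `F + T` this is `R₀ < 1` after dividing by `(1 - a)(1 - d) > 0`; likewise for `> 1`.
Taking `b = 0` gives `ρ(T) < 1`.
-/

theorem Matrix.mem_spectrum_fin_two_iff {K : Type*} [Field K] (M : Matrix (Fin 2) (Fin 2) K)
    (μ : K) : μ ∈ spectrum K M ↔ μ ^ 2 - M.trace * μ + M.det = 0 := by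
  simp [Matrix.mem_spectrum_iff_isRoot_charpoly, Matrix.charpoly_fin_two]

/-- The larger root of `X ^ 2 - (a + d) X + (a d - b c)`, the characteristic polynomial of
`!![a, b; c, d]`. -/
noncomputable def perronRoot (a b c d : ℝ) : ℝ :=
  (a + d + √((a - d) ^ 2 + 4 * (b * c))) / 2

section PerronRoot

variable {a b c d : ℝ}

theorem perronRoot_isRoot (hbc : 0 ≤ b * c) :
    perronRoot a b c d ^ 2 - (a + d) * perronRoot a b c d + (a * d - b * c) = 0 := by
  have hs := Real.sq_sqrt (show 0 ≤ (a - d) ^ 2 + 4 * (b * c) by positivity)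
  unfold perronRoot
  linear_combination hs / 4

theorem abs_sub_perronRoot_le (had : 0 ≤ a + d) :
    |a + d - perronRoot a b c d| ≤ perronRoot a b c d := by
  have hs := Real.sqrt_nonneg ((a - d) ^ 2 + 4 * (b * c))
  unfold perronRoot
  rw [abs_le]
  constructor <;> linarith

theorem perronRoot_lt_iff {t : ℝ} (h : a + d < 2 * t) :
    perronRoot a b c d < t ↔ b * c < (t - a) * (t - d) := by
  have key : (2 * t - (a + d)) ^ 2 - ((a - d) ^ 2 + 4 * (b * c)) =
      4 * ((t - a) * (t - d) - b * c) := by ring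
  rw [perronRoot, div_lt_iff₀ two_pos, ← lt_sub_iff_add_lt', mul_comm,
    Real.sqrt_lt' (by linarith)]
  constructor <;> intro <;> linarith

theorem lt_perronRoot_iff {t : ℝ} (h : a + d ≤ 2 * t) :
    t < perronRoot a b c d ↔ (t - a) * (t - d) < b * c := by
  have key : (2 * t - (a + d)) ^ 2 - ((a - d) ^ 2 + 4 * (b * c)) =
      4 * ((t - a) * (t - d) - b * c) := by ring
  rw [perronRoot, lt_div_iff₀ two_pos, ← sub_lt_iff_lt_add', mul_comm,
    Real.lt_sqrt (by linarith)]
  constructor <;> intro <;> linarith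

theorem spectrum_of_fin_two_map (hbc : 0 ≤ b * c) :
    spectrum ℂ ((Matrix.of ![![a, b], ![c, d]]).map (algebraMap ℝ ℂ)) =
      {(perronRoot a b c d : ℂ), ((a + d - perronRoot a b c d : ℝ) : ℂ)} := by
  ext μ
  have hroot : ((perronRoot a b c d : ℝ) : ℂ) ^ 2 - (a + d) * perronRoot a b c d
      + (a * d - b * c) = 0 := by exact_mod_cast perronRoot_isRoot hbc
  rw [Matrix.mem_spectrum_fin_two_iff, Set.mem_insert_iff, Set.mem_singleton_iff,
    ← sub_eq_zero (a := μ), ← sub_eq_zero (a := μ), ← mul_eq_zero]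
  simp only [Matrix.trace_fin_two, Matrix.det_fin_two, Matrix.map_apply, Matrix.of_apply,
    Matrix.cons_val', Matrix.cons_val_zero, Matrix.cons_val_one, Matrix.cons_val_fin_one,
    Complex.coe_algebraMap, Complex.ofReal_sub, Complex.ofReal_add]
  constructor <;> intro h
  · linear_combination h - hroot
  · linear_combination h + hroot

theorem spectralRadius_of_fin_two_map (had : 0 ≤ a + d) (hbc : 0 ≤ b * c) :
    spectralRadius ℂ ((Matrix.of ![![a, b], ![c, d]]).map (algebraMap ℝ ℂ)) =
      ENNReal.ofReal (perronRoot a b c d) := by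
  have hle := abs_sub_perronRoot_le (b := b) (c := c) had
  rw [spectralRadius, spectrum_of_fin_two_map hbc, iSup_pair]
  simp only [← enorm_eq_nnnorm, ← ofReal_norm, Complex.norm_real, Real.norm_eq_abs,
    abs_of_nonneg ((abs_nonneg _).trans hle)]
  exact sup_eq_left.mpr (ENNReal.ofReal_le_ofReal hle)

theorem spectralRadius_of_fin_two_map_lt_one_iff (had : 0 ≤ a + d) (had' : a + d < 2)
    (hbc : 0 ≤ b * c) :
    spectralRadius ℂ ((Matrix.of ![![a, b], ![c, d]]).map (algebraMap ℝ ℂ)) < 1 ↔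
      b * c < (1 - a) * (1 - d) := by
  rw [spectralRadius_of_fin_two_map had hbc, ENNReal.ofReal_lt_one,
    perronRoot_lt_iff (by linarith)]

theorem one_lt_spectralRadius_of_fin_two_map_iff (had : 0 ≤ a + d) (had' : a + d ≤ 2)
    (hbc : 0 ≤ b * c) :
    1 < spectralRadius ℂ ((Matrix.of ![![a, b], ![c, d]]).map (algebraMap ℝ ℂ)) ↔
      (1 - a) * (1 - d) < b * c := by
  rw [spectralRadius_of_fin_two_map had hbc, ENNReal.one_lt_ofReal,
    lt_perronRoot_iff (by linarith)]

end PerronRoot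

/-- `ρ(T) < 1`, and the spectral radius of `F + T` is below (resp. above)
one exactly when the basic reproduction number `R₀` is below (resp. above) one. -/
theorem spectral_radius_F_add_T_vs_R0
    (σE σI γE γI φ : ℝ)
    (hσE : σE ∈ Set.Ioo (0:ℝ) 1) (hσI : σI ∈ Set.Ioo (0:ℝ) 1)
    (hγE : γE ∈ Set.Ioo (0:ℝ) 1) (hγI : γI ∈ Set.Ioo (0:ℝ) 1)
    (hφ : 0 ≤ φ)
    (F T : Matrix (Fin 2) (Fin 2) ℝ)
    (hF : F = Matrix.of ![![0, σE * φ], ![0, 0]])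
    (hT : T = Matrix.of ![![σE * (1 - γE), 0], ![σI * γE, σI * (1 - γI)]])
    (R0 : ℝ)
    (hR0 : R0 = σE * σI * γE * φ /
        ((1 - σE * (1 - γE)) * (1 - σI * (1 - γI)))) :
    spectralRadius ℂ (T.map (algebraMap ℝ ℂ)) < 1 ∧
    (spectralRadius ℂ ((F + T).map (algebraMap ℝ ℂ)) < 1 ↔ R0 < 1) ∧
    (1 < spectralRadius ℂ ((F + T).map (algebraMap ℝ ℂ)) ↔ 1 < R0) := by
  obtain ⟨hσE0, hσE1⟩ := hσE
  obtain ⟨hσI0, hσI1⟩ := hσI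
  obtain ⟨hγE0, hγE1⟩ := hγE
  obtain ⟨hγI0, hγI1⟩ := hγI
  have ha : 0 < σE * (1 - γE) ∧ σE * (1 - γE) < 1 := ⟨by nlinarith, by nlinarith⟩
  have hd : 0 < σI * (1 - γI) ∧ σI * (1 - γI) < 1 := ⟨by nlinarith, by nlinarith⟩
  have hbc : 0 ≤ σE * φ * (σI * γE) := by positivity
  have hden : 0 < (1 - σE * (1 - γE)) * (1 - σI * (1 - γI)) := by nlinarith
  have hFT : F + T = Matrix.of ![![σE * (1 - γE), σE * φ], ![σI * γE, σI * (1 - γI)]] := by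
    subst hF hT
    ext i j
    fin_cases i <;> fin_cases j <;> simp
  rw [hR0, show σE * σI * γE * φ = σE * φ * (σI * γE) by ring, div_lt_one hden,
    one_lt_div hden, hFT, hT,
    spectralRadius_of_fin_two_map_lt_one_iff (by linarith) (by linarith) hbc,
    one_lt_spectralRadius_of_fin_two_map_iff (by linarith) (by linarith) hbc,
    spectralRadius_of_fin_two_map_lt_one_iff (by linarith) (by linarith) (by simp)]
  exact ⟨by simpa using hden, Iff.rfl, Iff.rfl⟩
end

section
/- (Theorem 4) Consider system (4) with standard incidence Φ(x) = βx, β ∈ (0,1], and constant recruitment B(N) = B > 0. If R₀ = σ^E σ^I γ^E β / ((1 − σ^E(1−γ^E))(1 − σ^I(1−γ^I))) > 1, then the system is uniformly persistent: there exists ε > 0 such that every solution with X(0) ∈ ℝ⁴₊, N(0) > 0 and E(0) + I(0) > 0 satisfies liminf_{t→∞} (E(t) + I(t)) > ε. -/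
/-! The total population satisfies `N (t + 1) ≤ B + σmax * N t`, so it is eventually bounded,
while `S t ≥ B` for `t ≥ 1`. Since `R₀ > 1`, there are `c < 1`, a weight `w > 0` and `ρ > 1` such
that `V = E + w * I` grows by the factor `ρ` at every step where `S ≥ c * N`. If `E + I` stays
below a small threshold `η` for long enough, `R` decays to `O(η)`, so `S ≥ c * N` and `V` grows;
hence `E + I` keeps returning above `η`. After each return `V` loses at most the factor
`min stayE stayI` per step until that quiet period is long enough, and grows from then on, which
bounds `E + I` from below uniformly in the initial state. -/

open Filter

theorem pow_mul_le_of_mul_le_succ {u : ℕ → ℝ} {r : ℝ} (hr : 0 ≤ r) {a : ℕ} :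
    ∀ {n : ℕ}, (∀ k ∈ Set.Ico a (a + n), r * u k ≤ u (k + 1)) → r ^ n * u a ≤ u (a + n)
  | 0, _ => by simp
  | n + 1, h => calc
      r ^ (n + 1) * u a = r * (r ^ n * u a) := by ring
      _ ≤ r * u (a + n) :=
        mul_le_mul_of_nonneg_left
          (pow_mul_le_of_mul_le_succ hr fun k ⟨hk₁, _⟩ => h k ⟨hk₁, by omega⟩) hr
      _ ≤ u (a + (n + 1)) := h (a + n) ⟨by omega, by omega⟩

theorem le_div_add_pow_mul_of_le_add_mul {u : ℕ → ℝ} {d r : ℝ} (hd : 0 ≤ d) (hr0 : 0 ≤ r)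
    (hr1 : r < 1) {a : ℕ} :
    ∀ {n : ℕ}, (∀ k ∈ Set.Ico a (a + n), u (k + 1) ≤ d + r * u k) →
      u (a + n) ≤ d / (1 - r) + r ^ n * u a
  | 0, _ => by simpa using div_nonneg hd (sub_nonneg.2 hr1.le)
  | n + 1, h => calc
      u (a + (n + 1)) ≤ d + r * u (a + n) := h (a + n) ⟨by omega, by omega⟩
      _ ≤ d + r * (d / (1 - r) + r ^ n * u a) := by
        gcongr
        exact le_div_add_pow_mul_of_le_add_mul hd hr0 hr1 fun k ⟨hk₁, _⟩ => h k ⟨hk₁, by omega⟩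
      _ = d / (1 - r) + r ^ (n + 1) * u a := by
        field_simp [(sub_pos.2 hr1).ne']
        ring

theorem min_one_mul_add_le {x y w : ℝ} (hx : 0 ≤ x) (hy : 0 ≤ y) :
    min 1 w * (x + y) ≤ x + w * y := by
  nlinarith [min_le_left 1 w, min_le_right 1 w]

theorem add_mul_le_max_one_mul {x y w : ℝ} (hx : 0 ≤ x) (hy : 0 ≤ y) :
    x + w * y ≤ max 1 w * (x + y) := by
  nlinarith [le_max_left 1 w, le_max_right 1 w]

theorem mul_one_sub_add_mul_le {a b x c : ℝ} (ha : a ≤ c) (hb : b ≤ c) (hx0 : 0 ≤ x)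
    (hx1 : x ≤ 1) : a * (1 - x) + b * x ≤ c := by
  nlinarith

/-- `(1, w)` is a left sub-eigenvector, with eigenvalue `ρ > 1`, of the nonnegative matrix
`!![a, p; q, b]`, whose spectral radius exceeds `1` exactly when `(1 - a) * (1 - b) < p * q`. -/
theorem exists_subinvariant_weight {a b p q : ℝ} (ha : a < 1) (hb : b < 1) (hq : 0 < q)
    (hpq : (1 - a) * (1 - b) < p * q) :
    ∃ w > 0, ∃ ρ > 1, ρ ≤ a + w * q ∧ ρ * w ≤ b * w + p := by
  have hlt : (1 - a) / q < p / (1 - b) := by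
    rw [div_lt_div_iff₀ hq (by linarith)]
    linarith
  obtain ⟨w, hw_low, hw_high⟩ := exists_between hlt
  have hw : 0 < w := (div_pos (by linarith) hq).trans hw_low
  have hE : 1 < a + w * q := by rw [div_lt_iff₀ hq] at hw_low; linarith
  have hI : 1 < b + p / w := by
    rw [lt_div_iff₀ (by linarith)] at hw_high
    have : 1 - b < p / w := by rw [lt_div_iff₀ hw]; linarith
    linarith
  refine ⟨w, hw, min (a + w * q) (b + p / w), lt_min hE hI, min_le_left _ _, ?_⟩
  calc min (a + w * q) (b + p / w) * w ≤ (b + p / w) * w := by gcongr; exact min_le_right _ _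
    _ = b * w + p := by field_simp

theorem eventually_pow_mul_le_of_grows_below {V : ℕ → ℝ} {m ρ θ : ℝ} {T t₀ : ℕ}
    (hm0 : 0 ≤ m) (hm1 : m ≤ 1) (hρ : 1 < ρ) (hV : ∀ t, 0 < V t)
    (hshrink : ∀ t, m * V t ≤ V (t + 1))
    (hgrow : ∀ t, t₀ ≤ t → (∀ u ∈ Set.Icc (t - T) t, V u < θ) → ρ * V t ≤ V (t + 1)) :
    ∀ᶠ t in atTop, m ^ (T + 1) * θ ≤ V t := by
  rcases lt_or_ge θ 0 with hθ | hθ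
  · exact .of_forall fun t =>
      (mul_nonpos_of_nonneg_of_nonpos (by positivity) hθ.le).trans (hV t).le
  have hvisit : ∀ t₁, ∃ s, t₁ ≤ s ∧ θ ≤ V s := by
    intro t₁
    by_contra! hbelow
    set a := max t₁ t₀ + T
    obtain ⟨n, hn⟩ := pow_unbounded_of_one_lt (θ / V a) hρ
    have hgrowth : ρ ^ n * V a ≤ V (a + n) :=
      pow_mul_le_of_mul_le_succ (by linarith) fun k ⟨hk₁, _⟩ =>
        hgrow k (by omega) fun u ⟨hu₁, _⟩ => hbelow u (by omega)
    rw [div_lt_iff₀ (hV a)] at hn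
    linarith [hbelow (a + n) (by omega)]
  obtain ⟨s₀, hs₀, hθs₀⟩ := hvisit t₀
  filter_upwards [eventually_ge_atTop s₀] with t ht
  set s := Nat.findGreatest (fun u => θ ≤ V u) t
  have hst : s ≤ t := Nat.findGreatest_le t
  have hs₀s : s₀ ≤ s := Nat.le_findGreatest ht hθs₀
  have hθs : θ ≤ V s := Nat.findGreatest_spec (P := fun u => θ ≤ V u) ht hθs₀
  have hbelow : ∀ u, s < u → u ≤ t → V u < θ := fun u h₁ h₂ =>
    not_le.1 (Nat.findGreatest_is_greatest h₁ h₂)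
  have hnear : ∀ k ≤ T + 1, m ^ (T + 1) * θ ≤ V (s + k) := fun k hk => calc
    m ^ (T + 1) * θ ≤ m ^ k * V s :=
      mul_le_mul (pow_le_pow_of_le_one hm0 hm1 hk) hθs hθ (by positivity)
    _ ≤ V (s + k) := pow_mul_le_of_mul_le_succ hm0 fun j _ => hshrink j
  by_cases hts : t ≤ s + (T + 1)
  · simpa [Nat.add_sub_cancel' hst] using hnear (t - s) (by omega)
  · have hmono : 1 ^ (t - (s + (T + 1))) * V (s + (T + 1)) ≤
        V (s + (T + 1) + (t - (s + (T + 1)))) :=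
      pow_mul_le_of_mul_le_succ zero_le_one fun j ⟨hj₁, hj₂⟩ => by
        have hj' := hgrow j (by omega) fun u ⟨hu₁, hu₂⟩ => hbelow u (by omega) (by omega)
        nlinarith [hV j]
    rw [one_pow, one_mul, Nat.add_sub_cancel' (by omega)] at hmono
    exact (hnear (T + 1) le_rfl).trans hmono

structure SEIRSModel where
  σS : ℝ
  σE : ℝ
  σI : ℝ
  σR : ℝ
  γE : ℝ
  γI : ℝ
  γR : ℝ
  β : ℝ
  B : ℝ
  σS_mem : σS ∈ Set.Ioo (0 : ℝ) 1
  σE_mem : σE ∈ Set.Ioo (0 : ℝ) 1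
  σI_mem : σI ∈ Set.Ioo (0 : ℝ) 1
  σR_mem : σR ∈ Set.Ioo (0 : ℝ) 1
  γE_mem : γE ∈ Set.Ioo (0 : ℝ) 1
  γI_mem : γI ∈ Set.Ioo (0 : ℝ) 1
  γR_mem : γR ∈ Set.Ioo (0 : ℝ) 1
  β_mem : β ∈ Set.Ioc (0 : ℝ) 1
  B_pos : 0 < B

namespace SEIRSModel

noncomputable section

variable (M : SEIRSModel)

def stayE : ℝ := M.σE * (1 - M.γE)

def stayI : ℝ := M.σI * (1 - M.γI)

def stayR : ℝ := M.σR * (1 - M.γR)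

def R₀ : ℝ := M.σE * M.σI * M.γE * M.β / ((1 - M.stayE) * (1 - M.stayI))

def σmax : ℝ := max (max M.σS M.σE) (max M.σI M.σR)

def totalBound : ℝ := M.B / (1 - M.σmax) + 1

theorem stay_mem {σ γ : ℝ} (hσ : σ ∈ Set.Ioo (0 : ℝ) 1) (hγ : γ ∈ Set.Ioo (0 : ℝ) 1) :
    σ * (1 - γ) ∈ Set.Ioo (0 : ℝ) 1 :=
  ⟨mul_pos hσ.1 (by linarith [hγ.2]), by nlinarith [hσ.1, hσ.2, hγ.1]⟩

theorem stayE_mem : M.stayE ∈ Set.Ioo (0 : ℝ) 1 := stay_mem M.σE_mem M.γE_mem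

theorem stayI_mem : M.stayI ∈ Set.Ioo (0 : ℝ) 1 := stay_mem M.σI_mem M.γI_mem

theorem stayR_mem : M.stayR ∈ Set.Ioo (0 : ℝ) 1 := stay_mem M.σR_mem M.γR_mem

theorem σmax_mem : M.σmax ∈ Set.Ioo (0 : ℝ) 1 :=
  ⟨M.σS_mem.1.trans_le ((le_max_left _ _).trans (le_max_left _ _)),
    max_lt (max_lt M.σS_mem.2 M.σE_mem.2) (max_lt M.σI_mem.2 M.σR_mem.2)⟩

theorem totalBound_pos : 0 < M.totalBound :=
  add_pos_of_nonneg_of_pos (div_nonneg M.B_pos.le (by linarith [M.σmax_mem.2])) one_pos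

theorem exists_growth_constants (hR : 1 < M.R₀) :
    ∃ c < 1, ∃ w > 0, ∃ ρ > 1, ρ ≤ M.stayE + w * (M.σI * M.γE) ∧
      ρ * w ≤ M.stayI * w + M.σE * M.β * c := by
  have hA : 0 < M.σE * M.σI * M.γE * M.β :=
    mul_pos (mul_pos (mul_pos M.σE_mem.1 M.σI_mem.1) M.γE_mem.1) M.β_mem.1
  have hden : 0 < (1 - M.stayE) * (1 - M.stayI) :=
    mul_pos (by linarith [M.stayE_mem.2]) (by linarith [M.stayI_mem.2])
  rw [R₀, one_lt_div hden, ← div_lt_one hA] at hR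
  obtain ⟨c, hc_low, hc⟩ := exists_between hR
  rw [div_lt_iff₀ hA] at hc_low
  obtain ⟨w, hw, ρ, hρ, hρE, hρI⟩ := exists_subinvariant_weight M.stayE_mem.2 M.stayI_mem.2
    (mul_pos M.σI_mem.1 M.γE_mem.1) (p := M.σE * M.β * c) (by linarith)
  exact ⟨c, hc, w, hw, ρ, hρ, hρE, hρI⟩

structure IsOrbit (S E I R : ℕ → ℝ) : Prop where
  S_succ : ∀ t, S (t + 1) = M.B + M.σS * M.γR * R t
    + M.σS * (1 - M.β * (I t / (S t + E t + I t + R t))) * S t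
  E_succ : ∀ t, E (t + 1) = M.σE * M.β * (I t / (S t + E t + I t + R t)) * S t + M.stayE * E t
  I_succ : ∀ t, I (t + 1) = M.σI * M.γE * E t + M.stayI * I t
  R_succ : ∀ t, R (t + 1) = M.σR * M.γI * I t + M.stayR * R t

def Admissible (s e i r : ℝ) : Prop := 0 ≤ s ∧ 0 ≤ e ∧ 0 ≤ i ∧ 0 ≤ r ∧ 0 < s + e + i + r

theorem incidence_mem {s e i r : ℝ} (h : Admissible s e i r) :
    M.β * (i / (s + e + i + r)) ∈ Set.Icc (0 : ℝ) 1 := by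
  obtain ⟨hs, he, hi, hr, hn⟩ := h
  have hfrac : i / (s + e + i + r) ≤ 1 := div_le_one_of_le₀ (by linarith) hn.le
  exact ⟨mul_nonneg M.β_mem.1.le (div_nonneg hi hn.le),
    mul_le_one₀ M.β_mem.2 (div_nonneg hi hn.le) hfrac⟩

theorem new_infections_nonneg {s e i r : ℝ} (h : Admissible s e i r) :
    0 ≤ M.σE * M.β * (i / (s + e + i + r)) * s :=
  mul_nonneg (by rw [mul_assoc]; exact mul_nonneg M.σE_mem.1.le (M.incidence_mem h).1) h.1

namespace IsOrbit

variable {M} {S E I R : ℕ → ℝ}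

theorem B_le_S_succ (hX : M.IsOrbit S E I R) {t : ℕ} (h : Admissible (S t) (E t) (I t) (R t)) :
    M.B ≤ S (t + 1) := by
  have hσS := M.σS_mem.1
  have hremain : 0 ≤ M.σS * (1 - M.β * (I t / (S t + E t + I t + R t))) * S t :=
    mul_nonneg (mul_nonneg hσS.le (by linarith [(M.incidence_mem h).2])) h.1
  have hreturn : 0 ≤ M.σS * M.γR * R t := mul_nonneg (mul_pos hσS M.γR_mem.1).le h.2.2.2.1
  rw [hX.S_succ]
  linarith

theorem admissible_succ (hX : M.IsOrbit S E I R) {t : ℕ}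
    (h : Admissible (S t) (E t) (I t) (R t)) :
    Admissible (S (t + 1)) (E (t + 1)) (I (t + 1)) (R (t + 1)) := by
  have hS' := hX.B_le_S_succ h
  have hE' : 0 ≤ E (t + 1) := by
    rw [hX.E_succ]
    exact add_nonneg (M.new_infections_nonneg h) (mul_nonneg M.stayE_mem.1.le h.2.1)
  have hI' : 0 ≤ I (t + 1) := by
    rw [hX.I_succ]
    exact add_nonneg (mul_nonneg (mul_pos M.σI_mem.1 M.γE_mem.1).le h.2.1)
      (mul_nonneg M.stayI_mem.1.le h.2.2.1)
  have hR' : 0 ≤ R (t + 1) := by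
    rw [hX.R_succ]
    exact add_nonneg (mul_nonneg (mul_pos M.σR_mem.1 M.γI_mem.1).le h.2.2.1)
      (mul_nonneg M.stayR_mem.1.le h.2.2.2.1)
  exact ⟨by linarith [M.B_pos], hE', hI', hR', by linarith [M.B_pos]⟩

theorem admissible (hX : M.IsOrbit S E I R) (h₀ : Admissible (S 0) (E 0) (I 0) (R 0)) :
    ∀ t, Admissible (S t) (E t) (I t) (R t)
  | 0 => h₀
  | t + 1 => hX.admissible_succ (hX.admissible h₀ t)

/-- Every coefficient of the total population at time `t + 1` is a convex combination of
survival probabilities. -/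
theorem total_succ_le (hX : M.IsOrbit S E I R) {t : ℕ} (h : Admissible (S t) (E t) (I t) (R t)) :
    S (t + 1) + E (t + 1) + I (t + 1) + R (t + 1) ≤
      M.B + M.σmax * (S t + E t + I t + R t) := by
  have hinc := M.incidence_mem h
  obtain ⟨hS, hE, hI, hR, -⟩ := h
  have hσS : M.σS ≤ M.σmax := (le_max_left _ _).trans (le_max_left _ _)
  have hσE : M.σE ≤ M.σmax := (le_max_right _ _).trans (le_max_left _ _)
  have hσI : M.σI ≤ M.σmax := (le_max_left _ _).trans (le_max_right _ _)
  have hσR : M.σR ≤ M.σmax := (le_max_right _ _).trans (le_max_right _ _)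
  have cS := mul_one_sub_add_mul_le hσS hσE hinc.1 hinc.2
  have cE := mul_one_sub_add_mul_le hσE hσI M.γE_mem.1.le M.γE_mem.2.le
  have cI := mul_one_sub_add_mul_le hσI hσR M.γI_mem.1.le M.γI_mem.2.le
  have cR := mul_one_sub_add_mul_le hσR hσS M.γR_mem.1.le M.γR_mem.2.le
  rw [hX.S_succ, hX.E_succ, hX.I_succ, hX.R_succ]
  simp only [stayE, stayI, stayR]
  nlinarith [mul_le_mul_of_nonneg_right cS hS, mul_le_mul_of_nonneg_right cE hE,
    mul_le_mul_of_nonneg_right cI hI, mul_le_mul_of_nonneg_right cR hR]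

theorem eventually_total_le (hX : M.IsOrbit S E I R) (h₀ : Admissible (S 0) (E 0) (I 0) (R 0)) :
    ∀ᶠ t in atTop, S t + E t + I t + R t ≤ M.totalBound := by
  have hN₀ := h₀.2.2.2.2
  obtain ⟨T, hT⟩ := exists_pow_lt_of_lt_one (inv_pos.2 hN₀) M.σmax_mem.2
  filter_upwards [eventually_ge_atTop T] with t ht
  have hN := le_div_add_pow_mul_of_le_add_mul (u := fun t => S t + E t + I t + R t) (a := 0)
    M.B_pos.le M.σmax_mem.1.le M.σmax_mem.2 (n := t) fun k _ =>
      hX.total_succ_le (hX.admissible h₀ k)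
  have hpow : M.σmax ^ t * (S 0 + E 0 + I 0 + R 0) ≤ 1 := by
    calc M.σmax ^ t * (S 0 + E 0 + I 0 + R 0)
        ≤ (S 0 + E 0 + I 0 + R 0)⁻¹ * (S 0 + E 0 + I 0 + R 0) := by
          gcongr
          exact (pow_le_pow_of_le_one M.σmax_mem.1.le M.σmax_mem.2.le ht).trans hT.le
      _ = 1 := inv_mul_cancel₀ hN₀.ne'
  simp only [zero_add] at hN
  rw [totalBound]
  linarith

theorem min_stay_mul_weighted_le (hX : M.IsOrbit S E I R) {t : ℕ}
    (h : Admissible (S t) (E t) (I t) (R t)) {w : ℝ} (hw : 0 ≤ w) :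
    min M.stayE M.stayI * (E t + w * I t) ≤ E (t + 1) + w * I (t + 1) := by
  have hnew := M.new_infections_nonneg h
  obtain ⟨-, hE, hI, -, -⟩ := h
  have hmove : 0 ≤ w * (M.σI * M.γE * E t) :=
    mul_nonneg hw (mul_nonneg (mul_pos M.σI_mem.1 M.γE_mem.1).le hE)
  rw [hX.E_succ, hX.I_succ]
  nlinarith [mul_le_mul_of_nonneg_right (min_le_left M.stayE M.stayI) hE,
    mul_le_mul_of_nonneg_right (min_le_right M.stayE M.stayI) (mul_nonneg hw hI)]

theorem weighted_growth_of_mul_total_le_S (hX : M.IsOrbit S E I R) {t : ℕ}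
    (h : Admissible (S t) (E t) (I t) (R t))
    {c w ρ : ℝ} (hρE : ρ ≤ M.stayE + w * (M.σI * M.γE))
    (hρI : ρ * w ≤ M.stayI * w + M.σE * M.β * c) (hcS : c * (S t + E t + I t + R t) ≤ S t) :
    ρ * (E t + w * I t) ≤ E (t + 1) + w * I (t + 1) := by
  obtain ⟨hS, hE, hI, -, hN⟩ := h
  have hinf : c * I t ≤ I t / (S t + E t + I t + R t) * S t := calc
    c * I t = I t / (S t + E t + I t + R t) * (c * (S t + E t + I t + R t)) := by
      field_simp
    _ ≤ I t / (S t + E t + I t + R t) * S t := by gcongr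
  rw [hX.E_succ, hX.I_succ]
  nlinarith [mul_le_mul_of_nonneg_left hinf (mul_pos M.σE_mem.1 M.β_mem.1).le,
    mul_le_mul_of_nonneg_right hρE hE, mul_le_mul_of_nonneg_right hρI hI]

theorem mul_total_le_S (hX : M.IsOrbit S E I R) {t : ℕ} (ht : 0 < t)
    (h : ∀ t, Admissible (S t) (E t) (I t) (R t)) {c : ℝ} (hc : c ≤ 1)
    (hsmall : E t + I t + R t ≤ (1 - c) * M.B) :
    c * (S t + E t + I t + R t) ≤ S t := by
  obtain ⟨hS, hE, hI, hR, -⟩ := h t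
  have hB : M.B ≤ S t := by
    obtain ⟨t, rfl⟩ := Nat.exists_eq_add_one_of_ne_zero ht.ne'
    exact hX.B_le_S_succ (h t)
  nlinarith

theorem R_le_of_I_le (hX : M.IsOrbit S E I R) {η : ℝ} (hη : 0 ≤ η) {a n : ℕ}
    (hI : ∀ k ∈ Set.Ico a (a + n), I k ≤ η) :
    R (a + n) ≤ M.σR * M.γI * η / (1 - M.stayR) + M.stayR ^ n * R a := by
  have hflow : 0 ≤ M.σR * M.γI := (mul_pos M.σR_mem.1 M.γI_mem.1).le
  refine le_div_add_pow_mul_of_le_add_mul (mul_nonneg hflow hη) M.stayR_mem.1.le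
    M.stayR_mem.2 fun k hk => ?_
  rw [hX.R_succ]
  gcongr
  exact hI k hk

/-- While `E + I` stays below `η` for `T + 1` steps, `R` decays below a multiple of `η`, so the
susceptible fraction stays above `c` and `E + w I` grows by the factor `ρ`. -/
theorem weighted_growth_of_quiet (hX : M.IsOrbit S E I R)
    (h : ∀ t, Admissible (S t) (E t) (I t) (R t))
    {c w ρ η : ℝ} (hc : c ≤ 1) (hρE : ρ ≤ M.stayE + w * (M.σI * M.γE))
    (hρI : ρ * w ≤ M.stayI * w + M.σE * M.β * c) (hη : 0 ≤ η)
    (hηB : 2 * η + M.σR * M.γI * η / (1 - M.stayR) ≤ (1 - c) * M.B) {T t : ℕ} (ht : T < t)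
    (hRold : M.stayR ^ T * R (t - T) ≤ η) (hquiet : ∀ u ∈ Set.Icc (t - T) t, E u + I u ≤ η) :
    ρ * (E t + w * I t) ≤ E (t + 1) + w * I (t + 1) := by
  have hR : R t ≤ M.σR * M.γI * η / (1 - M.stayR) + M.stayR ^ T * R (t - T) := by
    simpa only [Nat.sub_add_cancel ht.le] using hX.R_le_of_I_le hη (a := t - T) (n := T)
      fun k ⟨hk₁, hk₂⟩ => (le_add_of_nonneg_left (h k).2.1).trans (hquiet k ⟨hk₁, by omega⟩)
  have hEI := hquiet t ⟨Nat.sub_le _ _, le_rfl⟩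
  exact hX.weighted_growth_of_mul_total_le_S (h t) hρE hρI
    (hX.mul_total_le_S (by omega) h hc (by linarith))

theorem isBoundedUnder_le_infected (hX : M.IsOrbit S E I R)
    (h₀ : Admissible (S 0) (E 0) (I 0) (R 0)) :
    IsBoundedUnder (· ≤ ·) atTop fun t => E t + I t := by
  refine isBoundedUnder_of_eventually_le (a := M.totalBound)
    ((hX.eventually_total_le h₀).mono fun t ht => ?_)
  linarith [(hX.admissible h₀ t).1, (hX.admissible h₀ t).2.2.2.1]

end IsOrbit

theorem exists_quiet_threshold {c : ℝ} (hc : c < 1) :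
    ∃ η > 0, 2 * η + M.σR * M.γI * η / (1 - M.stayR) ≤ (1 - c) * M.B := by
  have hdecay : 0 < 1 - M.stayR := sub_pos.2 M.stayR_mem.2
  have hC : 0 ≤ M.σR * M.γI / (1 - M.stayR) :=
    div_nonneg (mul_pos M.σR_mem.1 M.γI_mem.1).le hdecay.le
  refine ⟨(1 - c) * M.B / (2 + M.σR * M.γI / (1 - M.stayR)),
    div_pos (mul_pos (sub_pos.2 hc) M.B_pos) (by linarith), le_of_eq ?_⟩
  have : 0 < 2 * (1 - M.stayR) + M.σR * M.γI := by nlinarith [M.σR_mem.1, M.γI_mem.1]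
  field_simp

theorem exists_eventually_le_infected (hR : 1 < M.R₀) :
    ∃ ε > 0, ∀ S E I R : ℕ → ℝ, M.IsOrbit S E I R → Admissible (S 0) (E 0) (I 0) (R 0) →
      0 < E 0 + I 0 → ∀ᶠ t in atTop, ε ≤ E t + I t := by
  obtain ⟨c, hc, w, hw, ρ, hρ, hρE, hρI⟩ := M.exists_growth_constants hR
  obtain ⟨η, hη, hηB⟩ := M.exists_quiet_threshold hc
  obtain ⟨T, hT⟩ := exists_pow_lt_of_lt_one (div_pos hη M.totalBound_pos) M.stayR_mem.2
  set m := min M.stayE M.stayI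
  have hm : m ∈ Set.Ioo (0 : ℝ) 1 :=
    ⟨lt_min M.stayE_mem.1 M.stayI_mem.1, (min_le_left _ _).trans_lt M.stayE_mem.2⟩
  have hw₁ : 0 < min 1 w := lt_min one_pos hw
  refine ⟨m ^ (T + 1) * (min 1 w * η) / max 1 w,
    div_pos (mul_pos (pow_pos hm.1 _) (mul_pos hw₁ hη)) (lt_max_of_lt_left one_pos), ?_⟩
  intro S E I R hX h₀ hEI₀
  have h := hX.admissible h₀
  obtain ⟨T₀, hT₀⟩ := eventually_atTop.1 (hX.eventually_total_le h₀)
  have hshrink (t : ℕ) := hX.min_stay_mul_weighted_le (h t) hw.le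
  have hV₀ : 0 < E 0 + w * I 0 :=
    (mul_pos hw₁ hEI₀).trans_le (min_one_mul_add_le h₀.2.1 h₀.2.2.1)
  have hV (t : ℕ) : 0 < E t + w * I t := by
    simpa using (mul_pos (pow_pos hm.1 t) hV₀).trans_le
      (pow_mul_le_of_mul_le_succ (u := fun t => E t + w * I t) hm.1.le fun k _ => hshrink k)
  have hgrowth := eventually_pow_mul_le_of_grows_below (V := fun t => E t + w * I t)
    (θ := min 1 w * η) (T := T) (t₀ := T₀ + T + 1) hm.1.le hm.2.le hρ hV hshrink
    fun t ht hbelow =>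
      hX.weighted_growth_of_quiet h hc.le hρE hρI hη.le hηB (T := T) (by omega) ?_ ?_
  · filter_upwards [hgrowth] with t ht
    rw [div_le_iff₀ (lt_max_of_lt_left one_pos), mul_comm (E t + I t)]
    exact ht.trans (add_mul_le_max_one_mul (h t).2.1 (h t).2.2.1)
  · have hRK : R (t - T) ≤ M.totalBound := by
      have := hT₀ (t - T) (by omega)
      linarith [(h (t - T)).1, (h (t - T)).2.1, (h (t - T)).2.2.1]
    rw [lt_div_iff₀ M.totalBound_pos] at hT
    nlinarith [pow_nonneg M.stayR_mem.1.le T]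
  · intro u hu
    exact le_of_mul_le_mul_left ((min_one_mul_add_le (h u).2.1 (h u).2.2.1).trans
      (hbelow u hu).le) hw₁

end

end SEIRSModel

/-- Theorem 4: for system (4) with standard incidence `Φ(x) = βx` and
constant recruitment `B > 0`, if `R₀ > 1` then the system is uniformly persistent in
the infected compartments. -/
theorem seirs_uniform_persistence
    (σS σE σI σR γE γI γR β B : ℝ)
    (hσS : σS ∈ Set.Ioo (0:ℝ) 1) (hσE : σE ∈ Set.Ioo (0:ℝ) 1)
    (hσI : σI ∈ Set.Ioo (0:ℝ) 1) (hσR : σR ∈ Set.Ioo (0:ℝ) 1)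
    (hγE : γE ∈ Set.Ioo (0:ℝ) 1) (hγI : γI ∈ Set.Ioo (0:ℝ) 1)
    (hγR : γR ∈ Set.Ioo (0:ℝ) 1)
    (hβ : β ∈ Set.Ioc (0:ℝ) 1) (hB : 0 < B)
    (hR0 : 1 < σE * σI * γE * β /
        ((1 - σE * (1 - γE)) * (1 - σI * (1 - γI)))) :
    ∃ ε > (0:ℝ), ∀ S E I R : ℕ → ℝ,
      0 ≤ S 0 → 0 ≤ E 0 → 0 ≤ I 0 → 0 ≤ R 0 →
      0 < S 0 + E 0 + I 0 + R 0 →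
      0 < E 0 + I 0 →
      (∀ t, S (t+1) = B + σS * γR * R t
          + σS * (1 - β * (I t / (S t + E t + I t + R t))) * S t) →
      (∀ t, E (t+1) = σE * β * (I t / (S t + E t + I t + R t)) * S t
          + σE * (1 - γE) * E t) →
      (∀ t, I (t+1) = σI * γE * E t + σI * (1 - γI) * I t) →
      (∀ t, R (t+1) = σR * γI * I t + σR * (1 - γR) * R t) →
      ε < Filter.liminf (fun t => E t + I t) Filter.atTop := by
  let M : SEIRSModel :=
    ⟨σS, σE, σI, σR, γE, γI, γR, β, B, hσS, hσE, hσI, hσR, hγE, hγI, hγR, hβ, hB⟩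
  obtain ⟨ε, hε, hpersist⟩ := M.exists_eventually_le_infected hR0
  refine ⟨ε / 2, half_pos hε, ?_⟩
  intro S E I R hS₀ hE₀ hI₀ hR₀ hN₀ hEI₀ hS hE hI hR
  have hX : M.IsOrbit S E I R := ⟨hS, hE, hI, hR⟩
  have h₀ : SEIRSModel.Admissible (S 0) (E 0) (I 0) (R 0) := ⟨hS₀, hE₀, hI₀, hR₀, hN₀⟩
  calc ε / 2 < ε := half_lt_self hε
    _ ≤ Filter.liminf (fun t => E t + I t) Filter.atTop :=
      Filter.le_liminf_of_le (hX.isBoundedUnder_le_infected h₀).isCoboundedUnder_ge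
        (hpersist S E I R hX h₀ hEI₀)
end

section
/- Consider system (4) with standard incidence Φ(x) = βx, β ∈ (0,1], and constant recruitment B(N) = B > 0. Let ε > 0 and suppose a solution with values in ℝ⁴₊ and N(t) > 0 for all t satisfies E(t) + I(t) < ε for all t ≥ t₀. Then there exists t₁ > t₀ such that R(t) < (1 + σ^R γ^I / (1 − σ^R(1 − γ^R))) ε for all t ≥ t₁; in particular E(t) + I(t) + R(t) ≤ (1 + r̄) ε for t ≥ t₁ with r̄ = 1 + σ^R γ^I / (1 − σ^R(1 − γ^R)) − 1 = σ^R γ^I / (1 − σ^R(1 − γ^R)). -/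
/-- for system (4) with standard incidence and constant recruitment,
if `E(t) + I(t) < ε` for all `t ≥ t₀`, then eventually
`R(t) < (1 + σᴿγᴵ/(1-σᴿ(1-γᴿ)))·ε =: r̄·ε`, and in particular
`E(t) + I(t) + R(t) ≤ (1 + r̄)·ε` (inequality (11) of the paper). -/
theorem seirs_R_eventually_small
    (σS σE σI σR γE γI γR β B : ℝ)
    (hσS : σS ∈ Set.Ioo (0:ℝ) 1) (hσE : σE ∈ Set.Ioo (0:ℝ) 1)
    (hσI : σI ∈ Set.Ioo (0:ℝ) 1) (hσR : σR ∈ Set.Ioo (0:ℝ) 1)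
    (hγE : γE ∈ Set.Ioo (0:ℝ) 1) (hγI : γI ∈ Set.Ioo (0:ℝ) 1)
    (hγR : γR ∈ Set.Ioo (0:ℝ) 1)
    (hβ : β ∈ Set.Ioc (0:ℝ) 1) (hB : 0 < B)
    (S E I R N : ℕ → ℝ)
    (hNdef : ∀ t, N t = S t + E t + I t + R t)
    (hnn : ∀ t, 0 ≤ S t ∧ 0 ≤ E t ∧ 0 ≤ I t ∧ 0 ≤ R t)
    (hNpos : ∀ t, 0 < N t)
    (hdynS : ∀ t, S (t+1) = B + σS * γR * R t
        + σS * (1 - β * (I t / N t)) * S t)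
    (hdynE : ∀ t, E (t+1) = σE * β * (I t / N t) * S t + σE * (1 - γE) * E t)
    (hdynI : ∀ t, I (t+1) = σI * γE * E t + σI * (1 - γI) * I t)
    (hdynR : ∀ t, R (t+1) = σR * γI * I t + σR * (1 - γR) * R t)
    (ε : ℝ) (hε : 0 < ε)
    (t₀ : ℕ) (hsmall : ∀ t ≥ t₀, E t + I t < ε) :
    ∃ t₁ > t₀,
      (∀ t ≥ t₁, R t < (1 + σR * γI / (1 - σR * (1 - γR))) * ε) ∧
      (∀ t ≥ t₁, E t + I t + R t ≤
        (1 + (1 + σR * γI / (1 - σR * (1 - γR)))) * ε) := by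
  obtain ⟨hσR0, hσR1⟩ := hσR
  obtain ⟨hγI0, hγI1⟩ := hγI
  obtain ⟨hγR0, hγR1⟩ := hγR
  set a : ℝ := σR * (1 - γR) with ha_def
  have ha0 : 0 < a := by rw [ha_def]; nlinarith
  have ha1 : a < 1 := by rw [ha_def]; nlinarith
  have h1a : 0 < 1 - a := by linarith
  set c : ℝ := σR * γI * ε / (1 - a) with hc_def
  have hc0 : 0 < c := by
    rw [hc_def]
    exact div_pos (by positivity) h1a
  have hkey : σR * γI * ε + a * c = c := by
    rw [hc_def]
    field_simp
    ring
  have hI : ∀ t ≥ t₀, I t < ε := fun t ht => by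
    have h1 := hsmall t ht
    have h2 := (hnn t).2.1
    linarith
  have hdecay : ∀ m : ℕ, R (t₀ + m) ≤ a ^ m * R t₀ + c := by
    intro m
    induction m with
    | zero => simp; linarith
    | succ m ih =>
      have hIm := hI (t₀ + m) (Nat.le_add_right _ _)
      have hRnn := (hnn (t₀ + m)).2.2.2
      have hInn := (hnn (t₀ + m)).2.2.1
      have hstep : R (t₀ + (m+1)) = σR * γI * I (t₀ + m) + a * R (t₀ + m) := by
        rw [show t₀ + (m+1) = (t₀ + m) + 1 from rfl, hdynR]
      rw [hstep]
      have h1 : σR * γI * I (t₀ + m) ≤ σR * γI * ε :=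
        mul_le_mul_of_nonneg_left (le_of_lt hIm) (by positivity)
      have h2 : a * R (t₀ + m) ≤ a * (a ^ m * R t₀ + c) := by nlinarith
      have h3 : σR * γI * ε + a * (a ^ m * R t₀ + c) = a ^ (m+1) * R t₀ + c := by
        rw [pow_succ]
        nlinarith [hkey]
      linarith
  have hR0 : 0 ≤ R t₀ := (hnn t₀).2.2.2
  obtain ⟨n, hn⟩ := exists_pow_lt_of_lt_one (show (0:ℝ) < ε / (R t₀ + 1) by positivity) ha1
  have hanR : a ^ (n+1) * R t₀ < ε := by
    have hpow : a ^ (n+1) ≤ a ^ n :=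
      pow_le_pow_of_le_one (le_of_lt ha0) (le_of_lt ha1) (by omega)
    have hpnn : (0:ℝ) ≤ a ^ (n+1) := by positivity
    have h2 : a ^ n * (R t₀ + 1) < ε := by
      rw [lt_div_iff₀ (by linarith : (0:ℝ) < R t₀ + 1)] at hn
      linarith
    nlinarith
  have hbase : R (t₀ + n + 1) < ε + c := by
    have hd : R (t₀ + (n+1)) ≤ a ^ (n+1) * R t₀ + c := hdecay (n+1)
    have heq : t₀ + n + 1 = t₀ + (n+1) := by omega
    rw [heq]
    linarith
  have hinv : ∀ m : ℕ, R (t₀ + n + 1 + m) < ε + c := by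
    intro m
    induction m with
    | zero => simpa using hbase
    | succ m ih =>
      have hIm := hI (t₀ + n + 1 + m) (by omega)
      have hInn := (hnn (t₀ + n + 1 + m)).2.2.1
      have hstep : R (t₀ + n + 1 + (m+1))
          = σR * γI * I (t₀ + n + 1 + m) + a * R (t₀ + n + 1 + m) := by
        rw [show t₀ + n + 1 + (m+1) = (t₀ + n + 1 + m) + 1 from rfl, hdynR]
      rw [hstep]
      have h1 : σR * γI * I (t₀ + n + 1 + m) ≤ σR * γI * ε :=
        mul_le_mul_of_nonneg_left (le_of_lt hIm) (by positivity)
      have h2 : a * R (t₀ + n + 1 + m) < a * (ε + c) := (mul_lt_mul_iff_right₀ ha0).mpr ih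
      have h3 : σR * γI * ε + a * (ε + c) ≤ ε + c := by nlinarith [hkey]
      linarith
  have hRsmall : ∀ t ≥ t₀ + n + 1, R t < ε + c := by
    intro t ht
    obtain ⟨m, rfl⟩ : ∃ m, t = t₀ + n + 1 + m := ⟨t - (t₀ + n + 1), by omega⟩
    exact hinv m
  have hceq : (1 + σR * γI / (1 - a)) * ε = ε + c := by
    rw [hc_def]; ring
  refine ⟨t₀ + n + 1, by omega, ?_, ?_⟩
  · intro t ht
    rw [hceq]
    exact hRsmall t ht
  · intro t ht
    have h1 := hRsmall t ht
    have h2 := hsmall t (by omega)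
    have hceq2 : (1 + (1 + σR * γI / (1 - a))) * ε = ε + (ε + c) := by
      rw [hc_def]; ring
    rw [hceq2]
    linarith
end

section
/- (Proposition 5) In the full two-time-scale model, assume each recruitment function B_j is bounded above by B̂_j, and set B̂ = Σ_{j=1}^n B̂_j and σ̂ = max over all j and C ∈ {S,E,I,R} of σ_j^C, so σ̂ ∈ (0,1). Then along any solution X(t) ∈ ℝ^{4n}₊ of X(t+1) = 𝒮(M(UX(t))^k X(t)) for which every patch has positive total population after the k movement steps (so the model is well defined), the total population N(t) = Σ_j (S_j(t)+E_j(t)+I_j(t)+R_j(t)) satisfies N(t+1) ≤ σ̂ N(t) + B̂ for all t; consequently limsup_{t→∞} N(t) ≤ B̂/(1−σ̂), i.e., the full system is dissipative. -/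
private lemma sum_mulVec_eq {n : ℕ} (A : Matrix (Fin n) (Fin n) ℝ)
    (h : ∀ b, ∑ a, A a b = 1) (v : Fin n → ℝ) :
    ∑ a, A.mulVec v a = ∑ b, v b := by
  simp only [Matrix.mulVec, dotProduct]
  rw [Finset.sum_comm]
  simp only [← Finset.sum_mul, h, one_mul]

private lemma sum_pow_mulVec_eq {n : ℕ} (A : Matrix (Fin n) (Fin n) ℝ)
    (h : ∀ b, ∑ a, A a b = 1) (k : ℕ) (v : Fin n → ℝ) :
    ∑ a, (A ^ k).mulVec v a = ∑ b, v b := by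
  induction k generalizing v with
  | zero => rw [pow_zero, Matrix.one_mulVec]
  | succ m ih =>
    rw [pow_succ, ← Matrix.mulVec_mulVec, ih]
    exact sum_mulVec_eq A h v

private lemma mulVec_pow_nonneg {n : ℕ} (A : Matrix (Fin n) (Fin n) ℝ)
    (h : ∀ a b, 0 ≤ A a b) (k : ℕ) (v : Fin n → ℝ) (hv : ∀ b, 0 ≤ v b) :
    ∀ a, 0 ≤ (A ^ k).mulVec v a := by
  induction k generalizing v with
  | zero => intro a; rw [pow_zero, Matrix.one_mulVec]; exact hv a
  | succ m ih =>
    intro a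
    rw [pow_succ, ← Matrix.mulVec_mulVec]
    refine ih (A.mulVec v) (fun b => ?_) a
    simp only [Matrix.mulVec, dotProduct]
    exact Finset.sum_nonneg fun c _ => mul_nonneg (h b c) (hv c)


open Finset in
/-- Proposition 5: in the full two-time-scale model
`X(t+1) = 𝒮(M(UX(t))^k X(t))` with bounded recruitment functions, the total
population satisfies `N(t+1) ≤ σ̂ N(t) + B̂`, hence `limsup N ≤ B̂/(1-σ̂)`:
the full system is dissipative. -/
theorem full_two_time_scale_dissipative
    (n k : ℕ) (hn : 0 < n) (hk : 1 ≤ k)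
    (σS σE σI σR γE γI γR : Fin n → ℝ)
    (hσS : ∀ j, σS j ∈ Set.Ioo (0:ℝ) 1) (hσE : ∀ j, σE j ∈ Set.Ioo (0:ℝ) 1)
    (hσI : ∀ j, σI j ∈ Set.Ioo (0:ℝ) 1) (hσR : ∀ j, σR j ∈ Set.Ioo (0:ℝ) 1)
    (hγE : ∀ j, γE j ∈ Set.Ioo (0:ℝ) 1) (hγI : ∀ j, γI j ∈ Set.Ioo (0:ℝ) 1)
    (hγR : ∀ j, γR j ∈ Set.Ioo (0:ℝ) 1)
    (Φ : Fin n → ℝ → ℝ)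
    (hΦmap : ∀ j, ∀ x ∈ Set.Icc (0:ℝ) 1, Φ j x ∈ Set.Icc (0:ℝ) 1)
    (hΦ0 : ∀ j, Φ j 0 = 0)
    (hΦmono : ∀ j, StrictMonoOn (Φ j) (Set.Icc (0:ℝ) 1))
    (hΦC2 : ∀ j, ContDiffOn ℝ 2 (Φ j) (Set.Icc (0:ℝ) 1))
    (B : Fin n → ℝ → ℝ)
    (hBnn : ∀ j, ∀ x ∈ Set.Ici (0:ℝ), 0 ≤ B j x)
    (hBC1 : ∀ j, ContDiffOn ℝ 1 (B j) (Set.Ici (0:ℝ)))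
    -- each B_j is bounded above by B̂_j :
    (Bhat : Fin n → ℝ) (hBhat : ∀ j, ∀ x ∈ Set.Ici (0:ℝ), B j x ≤ Bhat j)
    -- σ̂ is the maximum of all the survival parameters :
    (σhat : ℝ)
    (hσhat_ub : ∀ j, σS j ≤ σhat ∧ σE j ≤ σhat ∧ σI j ≤ σhat ∧ σR j ≤ σhat)
    (hσhat_mem : ∃ j, σhat = σS j ∨ σhat = σE j ∨ σhat = σI j ∨ σhat = σR j)
    -- the movement (column-stochastic) matrices, possibly depending on the totals Y :
    (MS ME MI MR : ℝ → ℝ → ℝ → ℝ → Matrix (Fin n) (Fin n) ℝ)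
    (hMS : ∀ s e i r, (∀ a b, 0 ≤ MS s e i r a b) ∧ ∀ b, ∑ a, MS s e i r a b = 1)
    (hME : ∀ s e i r, (∀ a b, 0 ≤ ME s e i r a b) ∧ ∀ b, ∑ a, ME s e i r a b = 1)
    (hMI : ∀ s e i r, (∀ a b, 0 ≤ MI s e i r a b) ∧ ∀ b, ∑ a, MI s e i r a b = 1)
    (hMR : ∀ s e i r, (∀ a b, 0 ≤ MR s e i r a b) ∧ ∀ b, ∑ a, MR s e i r a b = 1)
    -- a nonnegative solution of the full model :
    (S E I R : ℕ → Fin n → ℝ)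
    (hnn : ∀ t j, 0 ≤ S t j ∧ 0 ≤ E t j ∧ 0 ≤ I t j ∧ 0 ≤ R t j)
    -- the state after the k fast (movement) steps :
    (Shat Ehat Ihat Rhat : ℕ → Fin n → ℝ)
    (hShat : ∀ t, Shat t =
      ((MS (∑ j, S t j) (∑ j, E t j) (∑ j, I t j) (∑ j, R t j)) ^ k).mulVec (S t))
    (hEhat : ∀ t, Ehat t =
      ((ME (∑ j, S t j) (∑ j, E t j) (∑ j, I t j) (∑ j, R t j)) ^ k).mulVec (E t))
    (hIhat : ∀ t, Ihat t =
      ((MI (∑ j, S t j) (∑ j, E t j) (∑ j, I t j) (∑ j, R t j)) ^ k).mulVec (I t))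
    (hRhat : ∀ t, Rhat t =
      ((MR (∑ j, S t j) (∑ j, E t j) (∑ j, I t j) (∑ j, R t j)) ^ k).mulVec (R t))
    -- every patch has positive total population after the movement steps :
    (hNhatpos : ∀ t j, 0 < Shat t j + Ehat t j + Ihat t j + Rhat t j)
    -- the slow (local SEIRS) step applied to the post-movement state :
    (hdynS : ∀ t j, S (t+1) j =
      B j (Shat t j + Ehat t j + Ihat t j + Rhat t j) + σS j * γR j * Rhat t j
      + σS j * (1 - Φ j (Ihat t j / (Shat t j + Ehat t j + Ihat t j + Rhat t j)))
          * Shat t j)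
    (hdynE : ∀ t j, E (t+1) j =
      σE j * Φ j (Ihat t j / (Shat t j + Ehat t j + Ihat t j + Rhat t j)) * Shat t j
      + σE j * (1 - γE j) * Ehat t j)
    (hdynI : ∀ t j, I (t+1) j = σI j * γE j * Ehat t j + σI j * (1 - γI j) * Ihat t j)
    (hdynR : ∀ t j, R (t+1) j = σR j * γI j * Ihat t j + σR j * (1 - γR j) * Rhat t j) :
    (∀ t, (∑ j, (S (t+1) j + E (t+1) j + I (t+1) j + R (t+1) j)) ≤
        σhat * (∑ j, (S t j + E t j + I t j + R t j)) + ∑ j, Bhat j) ∧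
    Filter.limsup (fun t => ∑ j, (S t j + E t j + I t j + R t j)) Filter.atTop ≤
      (∑ j, Bhat j) / (1 - σhat) := by
  obtain ⟨hσpos, hσlt⟩ : 0 < σhat ∧ σhat < 1 := by
    obtain ⟨j, hj⟩ := hσhat_mem
    rcases hj with h | h | h | h <;> rw [h]
    exacts [⟨(hσS j).1, (hσS j).2⟩, ⟨(hσE j).1, (hσE j).2⟩,
      ⟨(hσI j).1, (hσI j).2⟩, ⟨(hσR j).1, (hσR j).2⟩]
  have hBhat0 : ∀ j, 0 ≤ Bhat j := fun j =>
    le_trans (hBnn j 0 Set.self_mem_Ici) (hBhat j 0 Set.self_mem_Ici)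
  have hShatnn : ∀ t j, 0 ≤ Shat t j := fun t j => by
    rw [hShat t]
    exact mulVec_pow_nonneg _ (hMS _ _ _ _).1 k _ (fun b => (hnn t b).1) j
  have hEhatnn : ∀ t j, 0 ≤ Ehat t j := fun t j => by
    rw [hEhat t]
    exact mulVec_pow_nonneg _ (hME _ _ _ _).1 k _ (fun b => (hnn t b).2.1) j
  have hIhatnn : ∀ t j, 0 ≤ Ihat t j := fun t j => by
    rw [hIhat t]
    exact mulVec_pow_nonneg _ (hMI _ _ _ _).1 k _ (fun b => (hnn t b).2.2.1) j
  have hRhatnn : ∀ t j, 0 ≤ Rhat t j := fun t j => by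
    rw [hRhat t]
    exact mulVec_pow_nonneg _ (hMR _ _ _ _).1 k _ (fun b => (hnn t b).2.2.2) j
  have hsumhat : ∀ t, ∑ j, (Shat t j + Ehat t j + Ihat t j + Rhat t j)
      = ∑ j, (S t j + E t j + I t j + R t j) := by
    intro t
    have hS' : ∑ j, Shat t j = ∑ j, S t j := by
      rw [hShat t]; exact sum_pow_mulVec_eq _ (hMS _ _ _ _).2 k _
    have hE' : ∑ j, Ehat t j = ∑ j, E t j := by
      rw [hEhat t]; exact sum_pow_mulVec_eq _ (hME _ _ _ _).2 k _
    have hI' : ∑ j, Ihat t j = ∑ j, I t j := by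
      rw [hIhat t]; exact sum_pow_mulVec_eq _ (hMI _ _ _ _).2 k _
    have hR' : ∑ j, Rhat t j = ∑ j, R t j := by
      rw [hRhat t]; exact sum_pow_mulVec_eq _ (hMR _ _ _ _).2 k _
    simp only [Finset.sum_add_distrib, hS', hE', hI', hR']
  have key : ∀ t, (∑ j, (S (t+1) j + E (t+1) j + I (t+1) j + R (t+1) j)) ≤
      σhat * (∑ j, (S t j + E t j + I t j + R t j)) + ∑ j, Bhat j := by
    intro t
    have hpatch : ∀ j, S (t+1) j + E (t+1) j + I (t+1) j + R (t+1) j ≤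
        Bhat j + σhat * (Shat t j + Ehat t j + Ihat t j + Rhat t j) := by
      intro j
      set a := Shat t j; set b := Ehat t j; set c := Ihat t j; set d := Rhat t j
      have ha := hShatnn t j; have hb := hEhatnn t j
      have hc := hIhatnn t j; have hd := hRhatnn t j
      have hNpos := hNhatpos t j
      set φ := Φ j (c / (a + b + c + d)) with hφdef
      have hφ : φ ∈ Set.Icc (0:ℝ) 1 := by
        apply hΦmap
        constructor
        · exact div_nonneg hc (le_of_lt hNpos)
        · rw [div_le_one hNpos]; linarith
      have hB : B j (a + b + c + d) ≤ Bhat j := hBhat j _ (le_of_lt hNpos)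
      have hσSj := hσS j; have hσEj := hσE j; have hσIj := hσI j; have hσRj := hσR j
      have hγEj := hγE j; have hγIj := hγI j; have hγRj := hγR j
      have hub := hσhat_ub j
      rw [hdynS t j, hdynE t j, hdynI t j, hdynR t j]
      nlinarith [mul_nonneg (mul_nonneg (sub_nonneg.2 hub.1) (sub_nonneg.2 hφ.2)) ha,
        mul_nonneg (mul_nonneg (sub_nonneg.2 hub.2.1) hφ.1) ha,
        mul_nonneg (mul_nonneg (sub_nonneg.2 hub.2.1) (by linarith [(hγE j).2] : (0:ℝ) ≤ 1 - γE j)) hb,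
        mul_nonneg (mul_nonneg (sub_nonneg.2 hub.2.2.1) (le_of_lt (hγE j).1)) hb,
        mul_nonneg (mul_nonneg (sub_nonneg.2 hub.2.2.1) (by linarith [(hγI j).2] : (0:ℝ) ≤ 1 - γI j)) hc,
        mul_nonneg (mul_nonneg (sub_nonneg.2 hub.2.2.2) (le_of_lt (hγI j).1)) hc,
        mul_nonneg (mul_nonneg (sub_nonneg.2 hub.2.2.2) (by linarith [(hγR j).2] : (0:ℝ) ≤ 1 - γR j)) hd,
        mul_nonneg (mul_nonneg (sub_nonneg.2 hub.1) (le_of_lt (hγR j).1)) hd]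
    calc (∑ j, (S (t+1) j + E (t+1) j + I (t+1) j + R (t+1) j))
        ≤ ∑ j, (Bhat j + σhat * (Shat t j + Ehat t j + Ihat t j + Rhat t j)) :=
          Finset.sum_le_sum fun j _ => hpatch j
      _ = σhat * (∑ j, (S t j + E t j + I t j + R t j)) + ∑ j, Bhat j := by
          rw [Finset.sum_add_distrib, ← Finset.mul_sum, hsumhat t]; ring
  refine ⟨key, ?_⟩
  set N : ℕ → ℝ := fun t => ∑ j, (S t j + E t j + I t j + R t j) with hNdef
  have hNnn : ∀ t, 0 ≤ N t := fun t => Finset.sum_nonneg fun j _ => by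
    obtain ⟨h1, h2, h3, h4⟩ := hnn t j; linarith
  set Bh := ∑ j, Bhat j with hBhdef
  have hBh : 0 ≤ Bh := Finset.sum_nonneg fun j _ => hBhat0 j
  have h1σ : 0 < 1 - σhat := by linarith
  set cc := Bh / (1 - σhat) with hccdef
  have hcc : 0 ≤ cc := div_nonneg hBh (le_of_lt h1σ)
  have hfix : σhat * cc + Bh = cc := by
    have hm : cc * (1 - σhat) = Bh := by
      rw [hccdef, div_mul_cancel₀ _ (ne_of_gt h1σ)]
    linear_combination -hm
  have hbd : ∀ t, N t ≤ σhat ^ t * N 0 + cc := by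
    intro t
    induction t with
    | zero => simpa using by linarith [hNnn 0]
    | succ m ih =>
      have h2 : σhat * N m ≤ σhat * (σhat ^ m * N 0 + cc) :=
        mul_le_mul_of_nonneg_left ih (le_of_lt hσpos)
      have h3 := key m
      have : σhat * (σhat ^ m * N 0 + cc) + Bh = σhat ^ (m+1) * N 0 + cc := by
        linear_combination hfix
      calc N (m+1) ≤ σhat * N m + Bh := h3
        _ ≤ σhat * (σhat ^ m * N 0 + cc) + Bh := by linarith
        _ = σhat ^ (m+1) * N 0 + cc := this
  have htend : Filter.Tendsto (fun t => σhat ^ t * N 0 + cc) Filter.atTop (nhds cc) := by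
    have h0 : Filter.Tendsto (fun t : ℕ => σhat ^ t) Filter.atTop (nhds 0) :=
      tendsto_pow_atTop_nhds_zero_of_lt_one (le_of_lt hσpos) hσlt
    have := (h0.mul_const (N 0)).add_const cc
    simpa using this
  have hcobdd : Filter.IsCoboundedUnder (· ≤ ·) Filter.atTop N := by
    have hbdd_ge : Filter.IsBoundedUnder (· ≥ ·) Filter.atTop N :=
      Filter.isBoundedUnder_of ⟨0, fun t => hNnn t⟩
    exact hbdd_ge.isCoboundedUnder_le
  have hbdd : Filter.IsBoundedUnder (· ≤ ·) Filter.atTop (fun t => σhat ^ t * N 0 + cc) :=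
    htend.isBoundedUnder_le
  calc Filter.limsup N Filter.atTop
      ≤ Filter.limsup (fun t => σhat ^ t * N 0 + cc) Filter.atTop :=
        Filter.limsup_le_limsup (Filter.Eventually.of_forall hbd) hcobdd hbdd
    _ = cc := htend.limsup_eq
end

section
/- (Theorem 8(b)) If R̄₀ > 1, then the reduced system (21) is uniformly persistent: there exists ε > 0 such that every solution with Y(0) ∈ ℝ⁴₊, S(0)+E(0)+I(0)+R(0) > 0 and E(0) + I(0) > 0 satisfies liminf_{t→∞} (E(t) + I(t)) > ε. -/
/-!
The total population `N = S + E + I + R` satisfies `N(t+1) ≤ B̄ + s N(t)` for some `s < 1`, so it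
is eventually below a bound independent of the solution, and `S(t) ≥ B̄` for `t ≥ 1`. While `E`,
`I`, `R` are small, the susceptible fraction of every patch is at least some `κ < 1`, so `(E, I)`
dominates the linear system with matrix `[[δ_E^E, κ β̄_I], [δ_E^I, δ_I^I]]`. For `κ` close to `1`
its spectral radius exceeds `1` because `R̄₀ > 1`, so `W = E + θ I` grows by a factor `r > 1` for
a suitable `θ > 0`. Since `W` loses at most a fixed factor per step, a small value of `W` forces
`E + I` to have been small during a fixed window of `K` steps, along which `R` decays; hence `W`
expands whenever it is below a fixed threshold, and it never falls far below that threshold.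
-/

open Filter Topology Finset

section Sequences

variable {W : ℕ → ℝ}

theorem pow_mul_le_of_mul_le_succ_s14 {μ : ℝ} (hμ : 0 ≤ μ) {s k : ℕ}
    (h : ∀ i < k, μ * W (s + i) ≤ W (s + i + 1)) : μ ^ k * W s ≤ W (s + k) := by
  induction k with
  | zero => simp
  | succ k ih =>
    calc μ ^ (k + 1) * W s = μ * (μ ^ k * W s) := by ring
      _ ≤ μ * W (s + k) := by gcongr; exact ih fun i hi => h i (by omega)
      _ ≤ W (s + (k + 1)) := h k (by omega)

theorem le_of_le_mul_pow_of_mul_le_succ {μ w : ℝ} (hμ : 0 < μ) (hμ1 : μ ≤ 1) (hw : 0 ≤ w)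
    (hdecay : ∀ t, μ * W t ≤ W (t + 1)) {T K i : ℕ} (hi : i ≤ K) (hWK : W (T + K) ≤ w * μ ^ K) :
    W (T + i) ≤ w := by
  have hback : μ ^ (K - i) * W (T + i) ≤ W (T + K) := by
    have := pow_mul_le_of_mul_le_succ_s14 hμ.le (s := T + i) (k := K - i) fun j _ => hdecay _
    rwa [show T + i + (K - i) = T + K by omega] at this
  have hpow : w * μ ^ K ≤ w * μ ^ (K - i) :=
    mul_le_mul_of_nonneg_left (pow_le_pow_of_le_one hμ.le hμ1 (by omega)) hw
  have hpos := pow_pos hμ (K - i)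
  nlinarith

theorem eventually_mul_le_of_expanding_below {μ r c : ℝ} (hW : ∀ t, 0 < W t)
    (hμ0 : 0 ≤ μ) (hμ1 : μ ≤ 1) (hc : 0 ≤ c) (hr : 1 < r)
    (hdecay : ∀ t, μ * W t ≤ W (t + 1))
    (hexp : ∀ᶠ t in atTop, W t ≤ c → r * W t ≤ W (t + 1)) :
    ∀ᶠ t in atTop, μ * c ≤ W t := by
  obtain ⟨T, hT⟩ := eventually_atTop.1 hexp
  obtain ⟨t₀, ht₀, hct₀⟩ : ∃ t₀ ≥ T, c < W t₀ := by
    by_contra! hsmall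
    obtain ⟨k, hk⟩ := pow_unbounded_of_one_lt (c / W T) hr
    have hgrow : r ^ k * W T ≤ W (T + k) := pow_mul_le_of_mul_le_succ_s14 (by linarith)
      fun i _ => hT _ (by omega) (hsmall _ (by omega))
    rw [div_lt_iff₀ (hW T)] at hk
    linarith [hsmall (T + k) (by omega)]
  refine eventually_atTop.2 ⟨t₀, fun t ht => ?_⟩
  induction t, ht using Nat.le_induction with
  | base => nlinarith
  | succ t ht ih =>
    rcases le_or_gt (W t) c with hWc | hWc
    · nlinarith [hT t (by omega) hWc, hW t]
    · nlinarith [hdecay t]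

theorem le_pow_mul_add_of_le_mul_add {I R : ℕ → ℝ} {p q η : ℝ} (hp : 0 ≤ p) (hq : 0 ≤ q)
    (hq1 : q < 1) (hη : 0 ≤ η) (hR : ∀ t, R (t + 1) ≤ p * I t + q * R t) {T k : ℕ}
    (hI : ∀ i < k, I (T + i) ≤ η) : R (T + k) ≤ q ^ k * R T + p * η / (1 - q) := by
  have hq1' : 0 < 1 - q := by linarith
  induction k with
  | zero =>
    simp only [add_zero, pow_zero, one_mul]
    exact le_add_of_nonneg_right (by positivity)
  | succ k ih =>
    have ih := ih fun i hi => hI i (by omega)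
    have hIk : p * I (T + k) ≤ p * η := by gcongr; exact hI k (by omega)
    calc R (T + (k + 1)) ≤ p * I (T + k) + q * R (T + k) := hR _
      _ ≤ p * η + q * (q ^ k * R T + p * η / (1 - q)) := by gcongr
      _ = q ^ (k + 1) * R T + p * η / (1 - q) := by field_simp; ring

theorem eventually_le_of_le_add_mul {x : ℕ → ℝ} {B s : ℝ} (hs0 : 0 ≤ s) (hs1 : s < 1)
    (hx : ∀ t, x (t + 1) ≤ B + s * x t) : ∀ᶠ t in atTop, x t ≤ B / (1 - s) + 1 := by
  have hs1' : 1 - s ≠ 0 := by linarith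
  have hgeom : ∀ t, x t - B / (1 - s) ≤ s ^ t * (x 0 - B / (1 - s)) := by
    intro t
    induction t with
    | zero => simp
    | succ t ih =>
      calc x (t + 1) - B / (1 - s) ≤ s * (x t - B / (1 - s)) := by
            have : B + s * x t - B / (1 - s) = s * (x t - B / (1 - s)) := by field_simp; ring
            linarith [hx t]
        _ ≤ s ^ (t + 1) * (x 0 - B / (1 - s)) := by rw [pow_succ', mul_assoc]; gcongr
  have hlim : Tendsto (fun t => s ^ t * (x 0 - B / (1 - s))) atTop (𝓝 0) := by
    simpa using (tendsto_pow_atTop_nhds_zero_of_lt_one hs0 hs1).mul_const (x 0 - B / (1 - s))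
  filter_upwards [hlim.eventually (gt_mem_nhds one_pos)] with t ht
  linarith [hgeom t]

end Sequences

/-- `(1, θ)` is a positive left sub-eigenvector of `[[a, b], [c, d]]` for an eigenvalue bound
`r > 1`. -/
theorem exists_expansion_weight {a b c d : ℝ} (ha : a < 1) (hc : 0 < c)
    (h : (1 - a) * (1 - d) < b * c) :
    ∃ r > 1, ∃ θ > 0, r ≤ a + θ * c ∧ r * θ ≤ b + θ * d := by
  have hcont : ∀ᶠ r in 𝓝[>] (1 : ℝ), (r - a) * (r - d) < b * c := by
    refine nhdsWithin_le_nhds (ContinuousAt.eventually_lt ?_ continuousAt_const h)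
    fun_prop
  obtain ⟨r, hr, hr1⟩ := (hcont.and self_mem_nhdsWithin).exists
  refine ⟨r, hr1, (r - a) / c, div_pos (by linarith [show (1:ℝ) < r from hr1]) hc, ?_, ?_⟩
  · rw [div_mul_cancel₀ _ hc.ne']; linarith
  · have : (r - a) / c * (r - d) ≤ b := by rw [div_mul_eq_mul_div, div_le_iff₀ hc]; exact hr.le
    linarith

section Comparison

variable {a b c d r θ E I E' I' : ℝ}

theorem min_mul_le_of_comparison (hc : 0 ≤ c) (hθ : 0 ≤ θ) (hE : 0 ≤ E) (hI : 0 ≤ I)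
    (hE' : a * E ≤ E') (hI' : c * E + d * I ≤ I') : min a d * (E + θ * I) ≤ E' + θ * I' := by
  have hμE : min a d * E ≤ a * E := mul_le_mul_of_nonneg_right (min_le_left a d) hE
  have hμI : θ * (min a d * I) ≤ θ * (d * I) :=
    mul_le_mul_of_nonneg_left (mul_le_mul_of_nonneg_right (min_le_right a d) hI) hθ
  have hθI : θ * (c * E + d * I) ≤ θ * I' := mul_le_mul_of_nonneg_left hI' hθ
  have hcE : 0 ≤ θ * (c * E) := mul_nonneg hθ (mul_nonneg hc hE)
  linarith

theorem mul_le_of_comparison (hθ : 0 ≤ θ) (hrE : r ≤ a + θ * c) (hrI : r * θ ≤ b + θ * d)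
    (hE : 0 ≤ E) (hI : 0 ≤ I) (hE' : b * I + a * E ≤ E') (hI' : c * E + d * I ≤ I') :
    r * (E + θ * I) ≤ E' + θ * I' := by
  nlinarith [mul_le_mul_of_nonneg_right hrE hE, mul_le_mul_of_nonneg_right hrI hI,
    mul_le_mul_of_nonneg_left hI' hθ]

end Comparison

theorem exists_pos_add_pow_mul_add_le {p q h N : ℝ} (hp : 0 ≤ p) (hq : 0 ≤ q) (hq1 : q < 1)
    (hh : 0 < h) : ∃ η > 0, ∃ K : ℕ, η + (q ^ K * N + p * η / (1 - q)) ≤ h := by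
  have hq1' : 0 < 1 - q := by linarith
  obtain ⟨K, hK⟩ : ∃ K : ℕ, q ^ K * N < h / 2 := by
    have := (tendsto_pow_atTop_nhds_zero_of_lt_one hq hq1).mul_const N
    rw [zero_mul] at this
    exact (this.eventually (gt_mem_nhds (half_pos hh))).exists
  refine ⟨h / 2 / (1 + p / (1 - q)), by positivity, K, ?_⟩
  have : h / 2 / (1 + p / (1 - q)) + p * (h / 2 / (1 + p / (1 - q))) / (1 - q) = h / 2 := by
    field_simp
  linarith

theorem uniform_persistence_of_comparison {a b c d p q r θ h N : ℝ}
    (ha : 0 < a) (ha1 : a ≤ 1) (hd : 0 < d) (hc : 0 ≤ c) (hp : 0 ≤ p) (hq : 0 ≤ q)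
    (hq1 : q < 1) (hθ : 0 < θ) (hr : 1 < r) (hrE : r ≤ a + θ * c) (hrI : r * θ ≤ b + θ * d)
    (hh : 0 < h) :
    ∃ ε > 0, ∀ E I R : ℕ → ℝ, (∀ t, 0 ≤ E t) → (∀ t, 0 ≤ I t) → (∀ t, 0 ≤ R t) →
      0 < E 0 + I 0 →
      (∀ t, a * E t ≤ E (t + 1)) →
      (∀ t, c * E t + d * I t ≤ I (t + 1)) →
      (∀ t, R (t + 1) ≤ p * I t + q * R t) →
      (∀ᶠ t in atTop, E t + I t + R t ≤ N) →
      (∀ᶠ t in atTop, E t + I t + R t ≤ h → b * I t + a * E t ≤ E (t + 1)) →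
      ε < liminf (fun t => E t + I t) atTop := by
  obtain ⟨η, hη, K, hηK⟩ := exists_pos_add_pow_mul_add_le (N := N) hp hq hq1 hh
  set μ := min a d
  have hμ : 0 < μ := lt_min ha hd
  have hμ1 : μ ≤ 1 := (min_le_left _ _).trans ha1
  set m := min 1 θ
  have hm : 0 < m := lt_min one_pos hθ
  set M := max 1 θ
  have hM : 0 < M := lt_max_of_lt_left one_pos
  refine ⟨μ * (m * η * μ ^ K) / M / 2, by positivity,
    fun E I R hE hI hR hEI0 hEs hIs hRs hN hgrow => ?_⟩
  set W := fun t => E t + θ * I t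
  have hWlo : ∀ t, m * (E t + I t) ≤ W t := fun t => by
    nlinarith [min_le_left 1 θ, min_le_right 1 θ, hE t, hI t]
  have hWhi : ∀ t, W t ≤ M * (E t + I t) := fun t => by
    nlinarith [le_max_left 1 θ, le_max_right 1 θ, hE t, hI t]
  have hdecay : ∀ t, μ * W t ≤ W (t + 1) := fun t =>
    min_mul_le_of_comparison hc hθ.le (hE t) (hI t) (hEs t) (hIs t)
  have hW : ∀ t, 0 < W t := by
    intro t
    induction t with
    | zero => nlinarith [hWlo 0]
    | succ t ih => nlinarith [hdecay t]
  -- Below the threshold at `T + K`, `W` stayed below `m η` on `[T, T + K]`, so `I ≤ η` there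
  -- and `R` has decayed from its bound `N` at time `T`.
  have hexp : ∀ᶠ t in atTop, W t ≤ m * η * μ ^ K → r * W t ≤ W (t + 1) := by
    obtain ⟨T₀, hT₀⟩ := eventually_atTop.1 (hN.and hgrow)
    refine eventually_atTop.2 ⟨T₀ + K, fun t ht hWt => ?_⟩
    obtain ⟨T, rfl⟩ : ∃ T, t = T + K := ⟨t - K, by omega⟩
    have hwindow : ∀ i ≤ K, E (T + i) + I (T + i) ≤ η := fun i hi => by
      have := le_of_le_mul_pow_of_mul_le_succ hμ hμ1 (by positivity) hdecay hi hWt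
      nlinarith [hWlo (T + i)]
    have hRT : R T ≤ N := by linarith [(hT₀ T (by omega)).1, hE T, hI T]
    have hRK := le_pow_mul_add_of_le_mul_add hp hq hq1 hη.le hRs (T := T) (k := K)
      fun i hi => by linarith [hwindow i hi.le, hE (T + i)]
    have hRsmall : q ^ K * R T ≤ q ^ K * N := mul_le_mul_of_nonneg_left hRT (pow_nonneg hq K)
    exact mul_le_of_comparison hθ.le hrE hrI (hE _) (hI _)
      ((hT₀ (T + K) (by omega)).2 (by linarith [hwindow K le_rfl])) (hIs _)
  have hlow := eventually_mul_le_of_expanding_below hW hμ.le hμ1 (by positivity) hr hdecay hexp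
  have hbdd : ∀ᶠ t in atTop, E t + I t ≤ N := hN.mono fun t ht => by linarith [hR t]
  have hlow' : ∀ᶠ t in atTop, μ * (m * η * μ ^ K) / M ≤ E t + I t :=
    hlow.mono fun t ht => by rw [div_le_iff₀ hM]; linarith [hWhi t]
  exact (half_lt_self (by positivity)).trans_le
    (le_liminf_of_le (isCoboundedUnder_ge_of_eventually_le _ hbdd) hlow')

theorem le_one_of_sum_eq_one {ι : Type*} [Fintype ι] {m : ι → ℝ} (hm : ∀ j, 0 ≤ m j)
    (h : ∑ j, m j = 1) (j : ι) : m j ≤ 1 :=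
  h ▸ single_le_sum (fun i _ => hm i) (mem_univ j)

theorem sum_mul_one_sub_add_sum_mul_le {ι : Type*} [Fintype ι] {x y g m : ι → ℝ} {s : ℝ}
    (hm : ∀ j, 0 ≤ m j) (hm1 : ∑ j, m j = 1) (hg0 : ∀ j, 0 ≤ g j) (hg1 : ∀ j, g j ≤ 1)
    (hx : ∀ j, x j ≤ s) (hy : ∀ j, y j ≤ s) :
    ∑ j, x j * (1 - g j) * m j + ∑ j, y j * g j * m j ≤ s :=
  calc ∑ j, x j * (1 - g j) * m j + ∑ j, y j * g j * m j
      = ∑ j, (x j * (1 - g j) + y j * g j) * m j := by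
        rw [← sum_add_distrib]; exact sum_congr rfl fun j _ => by ring
    _ ≤ ∑ j, s * m j := sum_le_sum fun j _ => mul_le_mul_of_nonneg_right
        (by nlinarith [mul_nonneg (sub_nonneg.2 (hx j)) (sub_nonneg.2 (hg1 j)),
          mul_nonneg (sub_nonneg.2 (hy j)) (hg0 j)]) (hm j)
    _ = s := by rw [← mul_sum, hm1, mul_one]

structure PatchModel (ι : Type*) [Fintype ι] where
  (B β σS σE σI σR γE γI γR mS mE mI mR : ι → ℝ)
  B_pos : ∀ j, 0 < B j
  β_mem : ∀ j, β j ∈ Set.Ioc (0 : ℝ) 1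
  σS_mem : ∀ j, σS j ∈ Set.Ioo (0 : ℝ) 1
  σE_mem : ∀ j, σE j ∈ Set.Ioo (0 : ℝ) 1
  σI_mem : ∀ j, σI j ∈ Set.Ioo (0 : ℝ) 1
  σR_mem : ∀ j, σR j ∈ Set.Ioo (0 : ℝ) 1
  γE_mem : ∀ j, γE j ∈ Set.Ioo (0 : ℝ) 1
  γI_mem : ∀ j, γI j ∈ Set.Ioo (0 : ℝ) 1
  γR_mem : ∀ j, γR j ∈ Set.Ioo (0 : ℝ) 1
  mS_pos : ∀ j, 0 < mS j
  mE_pos : ∀ j, 0 < mE j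
  mI_pos : ∀ j, 0 < mI j
  mR_pos : ∀ j, 0 < mR j
  sum_mS : ∑ j, mS j = 1
  sum_mE : ∑ j, mE j = 1
  sum_mI : ∑ j, mI j = 1
  sum_mR : ∑ j, mR j = 1

namespace PatchModel

variable {ι : Type*} [Fintype ι] (P : PatchModel ι)

def Bbar : ℝ := ∑ j, P.B j
def δSS : ℝ := ∑ j, P.σS j * P.mS j
def δRS : ℝ := ∑ j, P.σS j * P.γR j * P.mR j
def δEE : ℝ := ∑ j, P.σE j * (1 - P.γE j) * P.mE j
def δEI : ℝ := ∑ j, P.σI j * P.γE j * P.mE j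
def δII : ℝ := ∑ j, P.σI j * (1 - P.γI j) * P.mI j
def δIR : ℝ := ∑ j, P.σR j * P.γI j * P.mI j
def δRR : ℝ := ∑ j, P.σR j * (1 - P.γR j) * P.mR j
def βI : ℝ := ∑ j, P.σE j * P.β j * P.mI j
noncomputable def R0 : ℝ := P.δEI * P.βI / ((1 - P.δEE) * (1 - P.δII))

def localPop (S E I R : ℝ) (j : ι) : ℝ := P.mS j * S + P.mE j * E + P.mI j * I + P.mR j * R

/-- `P.incidence P.σS` and `P.incidence P.σE` are the paper's `β̄_S` and `β̄_E`. -/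
noncomputable def incidence (σ : ι → ℝ) (S E I R : ℝ) : ℝ :=
  ∑ j, σ j * P.β j * P.mI j * P.mS j / P.localPop S E I R j

noncomputable def infectionProb (S E I R : ℝ) (j : ι) : ℝ :=
  P.β j * (P.mI j * I / P.localPop S E I R j)

structure IsSolution (S E I R : ℕ → ℝ) : Prop where
  S_succ : ∀ t, S (t + 1) = P.Bbar + P.δRS * R t + P.δSS * S t
    - P.incidence P.σS (S t) (E t) (I t) (R t) * S t * I t
  E_succ : ∀ t, E (t + 1) = P.incidence P.σE (S t) (E t) (I t) (R t) * S t * I t + P.δEE * E t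
  I_succ : ∀ t, I (t + 1) = P.δEI * E t + P.δII * I t
  R_succ : ∀ t, R (t + 1) = P.δIR * I t + P.δRR * R t

theorem Bbar_pos [Nonempty ι] : 0 < P.Bbar :=
  sum_pos (fun j _ => P.B_pos j) univ_nonempty

theorem δEE_pos [Nonempty ι] : 0 < P.δEE :=
  sum_pos (fun j _ => mul_pos (mul_pos (P.σE_mem j).1 (sub_pos.2 (P.γE_mem j).2)) (P.mE_pos j))
    univ_nonempty

theorem δEI_pos [Nonempty ι] : 0 < P.δEI :=
  sum_pos (fun j _ => mul_pos (mul_pos (P.σI_mem j).1 (P.γE_mem j).1) (P.mE_pos j)) univ_nonempty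

theorem δII_pos [Nonempty ι] : 0 < P.δII :=
  sum_pos (fun j _ => mul_pos (mul_pos (P.σI_mem j).1 (sub_pos.2 (P.γI_mem j).2)) (P.mI_pos j))
    univ_nonempty

theorem δRS_nonneg : 0 ≤ P.δRS :=
  sum_nonneg fun j _ => (mul_pos (mul_pos (P.σS_mem j).1 (P.γR_mem j).1) (P.mR_pos j)).le

theorem δIR_nonneg : 0 ≤ P.δIR :=
  sum_nonneg fun j _ => (mul_pos (mul_pos (P.σR_mem j).1 (P.γI_mem j).1) (P.mI_pos j)).le

theorem δRR_nonneg : 0 ≤ P.δRR :=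
  sum_nonneg fun j _ =>
    (mul_pos (mul_pos (P.σR_mem j).1 (sub_pos.2 (P.γR_mem j).2)) (P.mR_pos j)).le

theorem exists_survival_bound [Nonempty ι] : ∃ s < 1, (∀ j, P.σS j ≤ s) ∧ (∀ j, P.σE j ≤ s) ∧
    (∀ j, P.σI j ≤ s) ∧ (∀ j, P.σR j ≤ s) := by
  obtain ⟨j₀, hj₀⟩ :=
    Finite.exists_max fun j => max (max (P.σS j) (P.σE j)) (max (P.σI j) (P.σR j))
  refine ⟨_, max_lt (max_lt (P.σS_mem j₀).2 (P.σE_mem j₀).2)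
    (max_lt (P.σI_mem j₀).2 (P.σR_mem j₀).2),
    fun j => ?_, fun j => ?_, fun j => ?_, fun j => ?_⟩ <;>
  · refine le_trans ?_ (hj₀ j)
    simp only [le_max_iff, le_refl, true_or, or_true]

section ColumnBounds

variable {s : ℝ}

theorem δEE_add_δEI_le (hE : ∀ j, P.σE j ≤ s) (hI : ∀ j, P.σI j ≤ s) : P.δEE + P.δEI ≤ s :=
  sum_mul_one_sub_add_sum_mul_le (fun j => (P.mE_pos j).le) P.sum_mE
    (fun j => (P.γE_mem j).1.le) (fun j => (P.γE_mem j).2.le) hE hI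

theorem δII_add_δIR_le (hI : ∀ j, P.σI j ≤ s) (hR : ∀ j, P.σR j ≤ s) : P.δII + P.δIR ≤ s :=
  sum_mul_one_sub_add_sum_mul_le (fun j => (P.mI_pos j).le) P.sum_mI
    (fun j => (P.γI_mem j).1.le) (fun j => (P.γI_mem j).2.le) hI hR

theorem δRR_add_δRS_le (hR : ∀ j, P.σR j ≤ s) (hS : ∀ j, P.σS j ≤ s) : P.δRR + P.δRS ≤ s :=
  sum_mul_one_sub_add_sum_mul_le (fun j => (P.mR_pos j).le) P.sum_mR
    (fun j => (P.γR_mem j).1.le) (fun j => (P.γR_mem j).2.le) hR hS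

end ColumnBounds

section State

variable {S E I R : ℝ}

theorem localPop_nonneg (hS : 0 ≤ S) (hE : 0 ≤ E) (hI : 0 ≤ I) (hR : 0 ≤ R) (j : ι) :
    0 ≤ P.localPop S E I R j := by
  have := P.mS_pos j; have := P.mE_pos j; have := P.mI_pos j; have := P.mR_pos j
  unfold localPop; positivity

theorem localPop_pos (hS : 0 < S) (hE : 0 ≤ E) (hI : 0 ≤ I) (hR : 0 ≤ R) (j : ι) :
    0 < P.localPop S E I R j := by
  have := P.mS_pos j; have := P.mE_pos j; have := P.mI_pos j; have := P.mR_pos j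
  unfold localPop; positivity

theorem infectionProb_nonneg (hS : 0 ≤ S) (hE : 0 ≤ E) (hI : 0 ≤ I) (hR : 0 ≤ R) (j : ι) :
    0 ≤ P.infectionProb S E I R j :=
  mul_nonneg (P.β_mem j).1.le
    (div_nonneg (mul_nonneg (P.mI_pos j).le hI) (P.localPop_nonneg hS hE hI hR j))

theorem infectionProb_le_one (hS : 0 ≤ S) (hE : 0 ≤ E) (hI : 0 ≤ I) (hR : 0 ≤ R) (j : ι) :
    P.infectionProb S E I R j ≤ 1 := by
  have hfrac : P.mI j * I / P.localPop S E I R j ≤ 1 := by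
    refine div_le_one_of_le₀ ?_ (P.localPop_nonneg hS hE hI hR j)
    have := P.mS_pos j; have := P.mE_pos j; have := P.mR_pos j
    unfold localPop; nlinarith
  exact mul_le_one₀ (P.β_mem j).2
    (div_nonneg (mul_nonneg (P.mI_pos j).le hI) (P.localPop_nonneg hS hE hI hR j)) hfrac

theorem incidence_mul_mul_eq (σ : ι → ℝ) (S E I R : ℝ) :
    P.incidence σ S E I R * S * I = (∑ j, σ j * P.infectionProb S E I R j * P.mS j) * S := by
  simp only [incidence, infectionProb, sum_mul]
  exact sum_congr rfl fun j _ => by ring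

theorem incidence_mul_mul_nonneg {σ : ι → ℝ} (hσ : ∀ j, 0 ≤ σ j) (hS : 0 ≤ S) (hE : 0 ≤ E)
    (hI : 0 ≤ I) (hR : 0 ≤ R) : 0 ≤ P.incidence σ S E I R * S * I := by
  rw [incidence_mul_mul_eq]
  exact mul_nonneg (sum_nonneg fun j _ => mul_nonneg (mul_nonneg (hσ j)
    (P.infectionProb_nonneg hS hE hI hR j)) (P.mS_pos j).le) hS

theorem incidence_σS_mul_mul_le (hS : 0 ≤ S) (hE : 0 ≤ E) (hI : 0 ≤ I) (hR : 0 ≤ R) :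
    P.incidence P.σS S E I R * S * I ≤ P.δSS * S := by
  rw [incidence_mul_mul_eq, δSS]
  refine mul_le_mul_of_nonneg_right (sum_le_sum fun j _ => ?_) hS
  have := mul_le_mul_of_nonneg_left (P.infectionProb_le_one hS hE hI hR j) (P.σS_mem j).1.le
  exact mul_le_mul_of_nonneg_right (by simpa using this) (P.mS_pos j).le

-- The left side is `(∑ j, (σS j * (1 - p j) + σE j * p j) * mS j) * S`, where `p` is the
-- infection probability.
theorem susceptible_column_le {s : ℝ} (hsS : ∀ j, P.σS j ≤ s) (hsE : ∀ j, P.σE j ≤ s)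
    (hS : 0 ≤ S) (hE : 0 ≤ E) (hI : 0 ≤ I) (hR : 0 ≤ R) :
    P.δSS * S - P.incidence P.σS S E I R * S * I + P.incidence P.σE S E I R * S * I ≤ s * S := by
  have hcol := sum_mul_one_sub_add_sum_mul_le (fun j => (P.mS_pos j).le) P.sum_mS
    (P.infectionProb_nonneg hS hE hI hR) (P.infectionProb_le_one hS hE hI hR) hsS hsE
  have hδ : P.δSS = ∑ j, P.σS j * (1 - P.infectionProb S E I R j) * P.mS j
      + ∑ j, P.σS j * P.infectionProb S E I R j * P.mS j := by
    rw [δSS, ← sum_add_distrib]; exact sum_congr rfl fun j _ => by ring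
  rw [incidence_mul_mul_eq, incidence_mul_mul_eq, hδ]
  nlinarith

theorem le_incidence_mul_mul {κ m₀ : ℝ} (hm₀ : ∀ j, m₀ ≤ P.mS j) (hκ0 : 0 ≤ κ) (hκ1 : κ ≤ 1)
    (hS : 0 < S) (hE : 0 ≤ E) (hI : 0 ≤ I) (hR : 0 ≤ R)
    (hsmall : E + I + R ≤ (1 - κ) * m₀ * S) :
    κ * P.βI * I ≤ P.incidence P.σE S E I R * S * I := by
  simp only [βI, incidence, sum_mul, mul_sum]
  refine sum_le_sum fun j _ => ?_
  have hmE := le_one_of_sum_eq_one (fun j => (P.mE_pos j).le) P.sum_mE j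
  have hmI := le_one_of_sum_eq_one (fun j => (P.mI_pos j).le) P.sum_mI j
  have hmR := le_one_of_sum_eq_one (fun j => (P.mR_pos j).le) P.sum_mR j
  have hfrac : κ ≤ P.mS j * S / P.localPop S E I R j := by
    rw [le_div_iff₀ (P.localPop_pos hS hE hI hR j), localPop]
    nlinarith [mul_le_of_le_one_left hE hmE, mul_le_of_le_one_left hI hmI,
      mul_le_of_le_one_left hR hmR, mul_le_mul_of_nonneg_right (hm₀ j) hS.le,
      mul_nonneg hκ0 (mul_nonneg (P.mS_pos j).le hS.le), sub_nonneg.2 hκ1]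
  have hcoef : 0 ≤ P.σE j * P.β j * P.mI j * I :=
    mul_nonneg (mul_nonneg (mul_nonneg (P.σE_mem j).1.le (P.β_mem j).1.le) (P.mI_pos j).le) hI
  calc κ * (P.σE j * P.β j * P.mI j) * I = P.σE j * P.β j * P.mI j * I * κ := by ring
    _ ≤ P.σE j * P.β j * P.mI j * I * (P.mS j * S / P.localPop S E I R j) :=
        mul_le_mul_of_nonneg_left hfrac hcoef
    _ = _ := by ring

end State

variable {P} {S E I R : ℕ → ℝ}

namespace IsSolution

theorem Bbar_le_S_succ (h : P.IsSolution S E I R) {t : ℕ} (hS : 0 ≤ S t) (hE : 0 ≤ E t)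
    (hI : 0 ≤ I t) (hR : 0 ≤ R t) : P.Bbar ≤ S (t + 1) := by
  rw [h.S_succ]
  linarith [P.incidence_σS_mul_mul_le hS hE hI hR, mul_nonneg P.δRS_nonneg hR]

theorem nonneg [Nonempty ι] (h : P.IsSolution S E I R) (hS : 0 ≤ S 0) (hE : 0 ≤ E 0)
    (hI : 0 ≤ I 0) (hR : 0 ≤ R 0) (t : ℕ) : 0 ≤ S t ∧ 0 ≤ E t ∧ 0 ≤ I t ∧ 0 ≤ R t := by
  induction t with
  | zero => exact ⟨hS, hE, hI, hR⟩
  | succ t ih =>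
    obtain ⟨hS, hE, hI, hR⟩ := ih
    refine ⟨P.Bbar_pos.le.trans (h.Bbar_le_S_succ hS hE hI hR), ?_, ?_, ?_⟩
    · rw [h.E_succ]
      exact add_nonneg (P.incidence_mul_mul_nonneg (fun j => (P.σE_mem j).1.le) hS hE hI hR)
        (mul_nonneg P.δEE_pos.le hE)
    · rw [h.I_succ]
      exact add_nonneg (mul_nonneg P.δEI_pos.le hE) (mul_nonneg P.δII_pos.le hI)
    · rw [h.R_succ]
      exact add_nonneg (mul_nonneg P.δIR_nonneg hI) (mul_nonneg P.δRR_nonneg hR)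

theorem total_succ_le (h : P.IsSolution S E I R) {s : ℝ} (hsS : ∀ j, P.σS j ≤ s)
    (hsE : ∀ j, P.σE j ≤ s) (hsI : ∀ j, P.σI j ≤ s) (hsR : ∀ j, P.σR j ≤ s) {t : ℕ}
    (hS : 0 ≤ S t) (hE : 0 ≤ E t) (hI : 0 ≤ I t) (hR : 0 ≤ R t) :
    S (t + 1) + E (t + 1) + I (t + 1) + R (t + 1) ≤ P.Bbar + s * (S t + E t + I t + R t) := by
  rw [h.S_succ, h.E_succ, h.I_succ, h.R_succ]
  nlinarith [P.susceptible_column_le hsS hsE hS hE hI hR,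
    mul_le_mul_of_nonneg_right (P.δEE_add_δEI_le hsE hsI) hE,
    mul_le_mul_of_nonneg_right (P.δII_add_δIR_le hsI hsR) hI,
    mul_le_mul_of_nonneg_right (P.δRR_add_δRS_le hsR hsS) hR]

theorem δEE_mul_le_E_succ (h : P.IsSolution S E I R) {t : ℕ} (hS : 0 ≤ S t) (hE : 0 ≤ E t)
    (hI : 0 ≤ I t) (hR : 0 ≤ R t) : P.δEE * E t ≤ E (t + 1) := by
  rw [h.E_succ]
  linarith [P.incidence_mul_mul_nonneg (fun j => (P.σE_mem j).1.le) hS hE hI hR]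

theorem E_succ_ge_of_small [Nonempty ι] {κ m₀ : ℝ} (h : P.IsSolution S E I R) (hm₀0 : 0 ≤ m₀)
    (hm₀ : ∀ j, m₀ ≤ P.mS j) (hκ0 : 0 ≤ κ) (hκ1 : κ ≤ 1) {t : ℕ} (hS : P.Bbar ≤ S t)
    (hE : 0 ≤ E t) (hI : 0 ≤ I t) (hR : 0 ≤ R t)
    (hsmall : E t + I t + R t ≤ (1 - κ) * m₀ * P.Bbar) :
    κ * P.βI * I t + P.δEE * E t ≤ E (t + 1) := by
  have hsmall' : E t + I t + R t ≤ (1 - κ) * m₀ * S t :=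
    hsmall.trans (mul_le_mul_of_nonneg_left hS (mul_nonneg (sub_nonneg.2 hκ1) hm₀0))
  rw [h.E_succ]
  linarith [P.le_incidence_mul_mul hm₀ hκ0 hκ1 (P.Bbar_pos.trans_le hS) hE hI hR hsmall']

end IsSolution

theorem uniformly_persistent [Nonempty ι] (hR0 : 1 < P.R0) :
    ∃ ε > 0, ∀ S E I R : ℕ → ℝ, P.IsSolution S E I R →
      0 ≤ S 0 → 0 ≤ E 0 → 0 ≤ I 0 → 0 ≤ R 0 → 0 < E 0 + I 0 →
      ε < liminf (fun t => E t + I t) atTop := by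
  obtain ⟨s, hs1, hsS, hsE, hsI, hsR⟩ := P.exists_survival_bound
  have hEE1 : P.δEE < 1 := by linarith [P.δEE_add_δEI_le hsE hsI, P.δEI_pos]
  have hII1 : P.δII < 1 := by linarith [P.δII_add_δIR_le hsI hsR, P.δIR_nonneg]
  have hRR1 : P.δRR < 1 := by linarith [P.δRR_add_δRS_le hsR hsS, P.δRS_nonneg]
  obtain ⟨j₀, hj₀⟩ := Finite.exists_min P.mS
  have hs0 : 0 ≤ s := ((P.σS_mem j₀).1.trans_le (hsS j₀)).le
  have hC : 0 < (1 - P.δEE) * (1 - P.δII) := mul_pos (by linarith) (by linarith)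
  have hCA : (1 - P.δEE) * (1 - P.δII) < P.δEI * P.βI := (one_lt_div hC).1 hR0
  obtain ⟨κ, hκC, hκ1⟩ := exists_between ((div_lt_one (hC.trans hCA)).2 hCA)
  have hκ0 : 0 < κ := (div_pos hC (hC.trans hCA)).trans hκC
  obtain ⟨r, hr, θ, hθ, hrE, hrI⟩ := exists_expansion_weight (b := κ * P.βI) (d := P.δII) hEE1
    P.δEI_pos (by rw [div_lt_iff₀ (hC.trans hCA)] at hκC; linarith)
  obtain ⟨ε, hε, hpers⟩ := uniform_persistence_of_comparison P.δEE_pos hEE1.le P.δII_pos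
    P.δEI_pos.le P.δIR_nonneg P.δRR_nonneg hRR1 hθ hr hrE hrI
    (h := (1 - κ) * P.mS j₀ * P.Bbar) (N := P.Bbar / (1 - s) + 1)
    (mul_pos (mul_pos (sub_pos.2 hκ1) (P.mS_pos j₀)) P.Bbar_pos)
  refine ⟨ε, hε, fun S E I R hsol hS₀ hE₀ hI₀ hR₀ hEI₀ => ?_⟩
  have hS t := (hsol.nonneg hS₀ hE₀ hI₀ hR₀ t).1
  have hE t := (hsol.nonneg hS₀ hE₀ hI₀ hR₀ t).2.1
  have hI t := (hsol.nonneg hS₀ hE₀ hI₀ hR₀ t).2.2.1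
  have hR t := (hsol.nonneg hS₀ hE₀ hI₀ hR₀ t).2.2.2
  have htotal : ∀ᶠ t in atTop, S t + E t + I t + R t ≤ P.Bbar / (1 - s) + 1 :=
    eventually_le_of_le_add_mul hs0 hs1 fun t =>
      hsol.total_succ_le hsS hsE hsI hsR (hS t) (hE t) (hI t) (hR t)
  refine hpers E I R hE hI hR hEI₀ (fun t => hsol.δEE_mul_le_E_succ (hS t) (hE t) (hI t) (hR t))
    (fun t => (hsol.I_succ t).ge) (fun t => (hsol.R_succ t).le)
    (htotal.mono fun t ht => by linarith [hS t]) (eventually_atTop.2 ⟨1, fun t ht => ?_⟩)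
  obtain ⟨t, rfl⟩ : ∃ t', t = t' + 1 := ⟨t - 1, by omega⟩
  exact hsol.E_succ_ge_of_small (P.mS_pos j₀).le hj₀ hκ0.le hκ1.le
    (hsol.Bbar_le_S_succ (hS t) (hE t) (hI t) (hR t)) (hE _) (hI _) (hR _)

end PatchModel

open Finset in
/-- Theorem 8(b): if `R̄₀ > 1`, the reduced system (21) is uniformly
persistent in the infected compartments. -/
theorem reduced_system_uniform_persistence
    (n : ℕ) (hn : 0 < n)
    (B β σS σE σI σR γE γI γR : Fin n → ℝ)
    (hB : ∀ j, 0 < B j) (hβ : ∀ j, β j ∈ Set.Ioc (0:ℝ) 1)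
    (hσS : ∀ j, σS j ∈ Set.Ioo (0:ℝ) 1) (hσE : ∀ j, σE j ∈ Set.Ioo (0:ℝ) 1)
    (hσI : ∀ j, σI j ∈ Set.Ioo (0:ℝ) 1) (hσR : ∀ j, σR j ∈ Set.Ioo (0:ℝ) 1)
    (hγE : ∀ j, γE j ∈ Set.Ioo (0:ℝ) 1) (hγI : ∀ j, γI j ∈ Set.Ioo (0:ℝ) 1)
    (hγR : ∀ j, γR j ∈ Set.Ioo (0:ℝ) 1)
    (mS mE mI mR : Fin n → ℝ)
    (hmS : ∀ j, 0 < mS j) (hmE : ∀ j, 0 < mE j)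
    (hmI : ∀ j, 0 < mI j) (hmR : ∀ j, 0 < mR j)
    (hmS1 : ∑ j, mS j = 1) (hmE1 : ∑ j, mE j = 1)
    (hmI1 : ∑ j, mI j = 1) (hmR1 : ∑ j, mR j = 1)
    -- the basic reproduction number R̄₀ = δ_E^I β̄_I / ((1-δ_E^E)(1-δ_I^I)) > 1 :
    (hR0 : 1 < (∑ j, σI j * γE j * mE j) * (∑ j, σE j * β j * mI j) /
        ((1 - ∑ j, σE j * (1 - γE j) * mE j)
          * (1 - ∑ j, σI j * (1 - γI j) * mI j))) :
    ∃ ε > (0:ℝ), ∀ S E I R : ℕ → ℝ,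
      0 ≤ S 0 → 0 ≤ E 0 → 0 ≤ I 0 → 0 ≤ R 0 →
      0 < S 0 + E 0 + I 0 + R 0 →
      0 < E 0 + I 0 →
      (∀ t, S (t+1) = (∑ j, B j) + (∑ j, σS j * γR j * mR j) * R t
          + (∑ j, σS j * mS j) * S t
          - (∑ j, σS j * β j * mI j * mS j /
              (mS j * S t + mE j * E t + mI j * I t + mR j * R t)) * S t * I t) →
      (∀ t, E (t+1) = (∑ j, σE j * β j * mI j * mS j /
              (mS j * S t + mE j * E t + mI j * I t + mR j * R t)) * S t * I t
          + (∑ j, σE j * (1 - γE j) * mE j) * E t) →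
      (∀ t, I (t+1) = (∑ j, σI j * γE j * mE j) * E t
          + (∑ j, σI j * (1 - γI j) * mI j) * I t) →
      (∀ t, R (t+1) = (∑ j, σR j * γI j * mI j) * I t
          + (∑ j, σR j * (1 - γR j) * mR j) * R t) →
      ε < Filter.liminf (fun t => E t + I t) Filter.atTop := by
  have : Nonempty (Fin n) := ⟨⟨0, hn⟩⟩
  let P : PatchModel (Fin n) := ⟨B, β, σS, σE, σI, σR, γE, γI, γR, mS, mE, mI, mR, hB, hβ, hσS,
    hσE, hσI, hσR, hγE, hγI, hγR, hmS, hmE, hmI, hmR, hmS1, hmE1, hmI1, hmR1⟩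
  obtain ⟨ε, hε, hpers⟩ := P.uniformly_persistent hR0
  exact ⟨ε, hε, fun S E I R hS hE hI hR _ hEI hSeq hEeq hIeq hReq =>
    hpers S E I R ⟨hSeq, hEeq, hIeq, hReq⟩ hS hE hI hR hEI⟩
end

section
/- Let A > 0, n ≥ 1, and for j = 1,…,n let σ_j, γ_j ∈ (0,1) and m_j > 0 with Σ_{j=1}^n m_j = 1. If A σ_j / (1 − σ_j(1 − γ_j)) > 1 for every j (the disease is endemic in each isolated patch), then A (Σ_{j=1}^n σ_j m_j) / (1 − Σ_{j=1}^n σ_j(1 − γ_j) m_j) > 1. In particular, if exposed and infectious individuals are distributed among patches with the same stable proportions m_j^E = m_j^I = m_j, the global basic reproduction number R̄₀ is still greater than 1. -/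
open Finset in
/-- if the disease is endemic in every isolated patch
(`A σ_j / (1 - σ_j(1-γ_j)) > 1` for all `j`) and exposed and infectious individuals
share the same stable distribution `m_j`, then the global reproduction number is
still greater than one. -/
theorem equal_distributions_keep_endemicity
    (A : ℝ) (hA : 0 < A) (n : ℕ) (hn : 1 ≤ n)
    (σ γ m : Fin n → ℝ)
    (hσ : ∀ j, σ j ∈ Set.Ioo (0:ℝ) 1) (hγ : ∀ j, γ j ∈ Set.Ioo (0:ℝ) 1)
    (hm : ∀ j, 0 < m j) (hm1 : ∑ j, m j = 1)
    (hlocal : ∀ j, 1 < A * σ j / (1 - σ j * (1 - γ j))) :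
    1 < A * (∑ j, σ j * m j) / (1 - ∑ j, σ j * (1 - γ j) * m j) := by
  have hden : ∀ j, 0 < 1 - σ j * (1 - γ j) := by
    intro j
    have h1 := (hσ j).1; have h2 := (hσ j).2
    have h3 := (hγ j).1; have h4 := (hγ j).2
    nlinarith
  have hkey : ∀ j, 1 - σ j * (1 - γ j) < A * σ j := by
    intro j
    have := hlocal j
    have hd := hden j
    rw [lt_div_iff₀ hd] at this
    linarith
  have hsum : ∑ j, (1 - σ j * (1 - γ j)) * m j < ∑ j, A * σ j * m j := by
    apply Finset.sum_lt_sum_of_nonempty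
    · exact Finset.univ_nonempty_iff.mpr (Fin.pos_iff_nonempty.mp hn)
    · intro j _
      exact mul_lt_mul_of_pos_right (hkey j) (hm j)
  have hsum' : 1 - ∑ j, σ j * (1 - γ j) * m j < A * ∑ j, σ j * m j := by
    have e1 : ∑ j, (1 - σ j * (1 - γ j)) * m j
        = (∑ j, m j) - ∑ j, σ j * (1 - γ j) * m j := by
      rw [← Finset.sum_sub_distrib]; congr 1; ext j; ring
    have e2 : ∑ j, A * σ j * m j = A * ∑ j, σ j * m j := by
      rw [Finset.mul_sum]; congr 1; ext j; ring
    rw [e1, e2, hm1] at hsum; exact hsum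
  have hD : 0 < 1 - ∑ j, σ j * (1 - γ j) * m j := by
    have : ∑ j, σ j * (1 - γ j) * m j < ∑ j, m j := by
      apply Finset.sum_lt_sum_of_nonempty
      · exact Finset.univ_nonempty_iff.mpr (Fin.pos_iff_nonempty.mp hn)
      · intro j _
        have := hden j
        nlinarith [hm j]
    linarith [hm1 ▸ this]
  rw [lt_div_iff₀ hD]
  linarith
end

section
/- Let σ₁, σ₂, γ₁, γ₂ ∈ (0,1), A > 0, and define g(x,y) = (σ₁ x + σ₂(1−x)) / ((1 − σ₁(1−γ₁)) y + (1 − σ₂(1−γ₂))(1−y)) on [0,1]×[0,1]. If A·g(0,0) > 1 and A·g(1,1) > 1 (the disease is endemic in each isolated patch), then it is impossible that both A·g(1,0) < 1 and A·g(0,1) < 1 hold. -/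
/-- if both isolated patches are endemic (`A·g(0,0) > 1` and
`A·g(1,1) > 1`), then it is impossible that both `A·g(1,0) < 1` and
`A·g(0,1) < 1` hold. -/
theorem not_both_off_diagonal_corners_small
    (σ₁ σ₂ γ₁ γ₂ A : ℝ)
    (hσ₁ : σ₁ ∈ Set.Ioo (0:ℝ) 1) (hσ₂ : σ₂ ∈ Set.Ioo (0:ℝ) 1)
    (hγ₁ : γ₁ ∈ Set.Ioo (0:ℝ) 1) (hγ₂ : γ₂ ∈ Set.Ioo (0:ℝ) 1)
    (hA : 0 < A)
    (g : ℝ → ℝ → ℝ)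
    (hg : ∀ x y, g x y = (σ₁ * x + σ₂ * (1 - x)) /
        ((1 - σ₁ * (1 - γ₁)) * y + (1 - σ₂ * (1 - γ₂)) * (1 - y)))
    (h00 : 1 < A * g 0 0) (h11 : 1 < A * g 1 1) :
    ¬(A * g 1 0 < 1 ∧ A * g 0 1 < 1) := by
  rintro ⟨h10, h01⟩
  obtain ⟨hσ₁0, hσ₁1⟩ := hσ₁
  obtain ⟨hσ₂0, hσ₂1⟩ := hσ₂
  obtain ⟨hγ₁0, hγ₁1⟩ := hγ₁
  obtain ⟨hγ₂0, hγ₂1⟩ := hγ₂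
  have hd₁ : 0 < 1 - σ₁ * (1 - γ₁) := by nlinarith
  have hd₂ : 0 < 1 - σ₂ * (1 - γ₂) := by nlinarith
  rw [hg] at h00 h11 h10 h01
  norm_num at h00 h11 h10 h01
  rw [mul_div_assoc', lt_div_iff₀ hd₂] at h00
  rw [mul_div_assoc', lt_div_iff₀ hd₁] at h11
  rw [mul_div_assoc', div_lt_one hd₂] at h10
  rw [mul_div_assoc', div_lt_one hd₁] at h01
  nlinarith [mul_pos hA hσ₁0, mul_pos hA hσ₂0]
end

section
/- Let σ₁, σ₂, γ₁, γ₂ ∈ (0,1), A > 0, and define g(x,y) = (σ₁ x + σ₂(1−x)) / ((1 − σ₁(1−γ₁)) y + (1 − σ₂(1−γ₂))(1−y)) on [0,1]×[0,1]. If 1 < A·g(0,0) ≤ A·g(1,1) (conditions (29): both isolated patches are endemic) and A σ₁ / (1 − σ₂(1−γ₂)) < 1 (condition (30), i.e., A·g(1,0) < 1), then there exist x, y ∈ (0,1) such that A·g(x,y) < 1; that is, there are strictly interior stable distributions of exposed and infectious individuals between the two patches for which the reduced basic reproduction number R̄₀ = A·g(x,y) is less than 1, so the disease can be eradicated globally by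 appropriate movements. -/
/-- if both isolated patches are endemic
(`1 < A·g(0,0) ≤ A·g(1,1)`, conditions (29)) and condition (30) holds
(`A σ₁/(1-σ₂(1-γ₂)) < 1`, i.e. `A·g(1,0) < 1`), then there are strictly interior
distributions `(x,y)` of exposed and infectious individuals for which the reduced
basic reproduction number `R̄₀ = A·g(x,y)` is less than one: the disease can be
eradicated globally by appropriate movements. -/
theorem global_eradication_by_movements
    (σ₁ σ₂ γ₁ γ₂ A : ℝ)
    (hσ₁ : σ₁ ∈ Set.Ioo (0:ℝ) 1) (hσ₂ : σ₂ ∈ Set.Ioo (0:ℝ) 1)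
    (hγ₁ : γ₁ ∈ Set.Ioo (0:ℝ) 1) (hγ₂ : γ₂ ∈ Set.Ioo (0:ℝ) 1)
    (hA : 0 < A)
    (g : ℝ → ℝ → ℝ)
    (hg : ∀ x y, g x y = (σ₁ * x + σ₂ * (1 - x)) /
        ((1 - σ₁ * (1 - γ₁)) * y + (1 - σ₂ * (1 - γ₂)) * (1 - y)))
    (h00 : 1 < A * g 0 0) (h0011 : A * g 0 0 ≤ A * g 1 1)
    (h30 : A * σ₁ / (1 - σ₂ * (1 - γ₂)) < 1) :
    ∃ x ∈ Set.Ioo (0:ℝ) 1, ∃ y ∈ Set.Ioo (0:ℝ) 1, A * g x y < 1 := by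
  obtain ⟨hσ₁0, hσ₁1⟩ := hσ₁
  obtain ⟨hσ₂0, hσ₂1⟩ := hσ₂
  obtain ⟨hγ₁0, hγ₁1⟩ := hγ₁
  obtain ⟨hγ₂0, hγ₂1⟩ := hγ₂
  set c₁ : ℝ := 1 - σ₁ * (1 - γ₁) with hc₁def
  set c₂ : ℝ := 1 - σ₂ * (1 - γ₂) with hc₂def
  have hc₁ : 0 < c₁ := by nlinarith
  have hc₂ : 0 < c₂ := by nlinarith
  have hδ : 0 < c₂ - A * σ₁ := by
    have := (div_lt_one hc₂).mp h30
    linarith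
  set δ : ℝ := c₂ - A * σ₁ with hδdef
  set M : ℝ := A * (σ₂ - σ₁) - (c₁ - c₂) with hMdef
  set ε : ℝ := min (1/2) (δ / (2 * (|M| + 1))) with hεdef
  have hMpos : 0 < |M| + 1 := by positivity
  have hεpos : 0 < ε := by
    apply lt_min (by norm_num)
    positivity
  have hεhalf : ε ≤ 1/2 := min_le_left _ _
  have hεM : ε ≤ δ / (2 * (|M| + 1)) := min_le_right _ _
  have hε1 : ε < 1 := by linarith
  refine ⟨1 - ε, ⟨by linarith, by linarith⟩, ε, ⟨hεpos, hε1⟩, ?_⟩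
  rw [hg]
  have hden : 0 < c₁ * ε + c₂ * (1 - ε) := by nlinarith
  rw [mul_div_assoc', div_lt_one hden]
  have hεMle : ε * M < δ := by
    have h1 : ε * M ≤ ε * |M| := by
      have := le_abs_self M
      nlinarith
    have h2 : ε * |M| ≤ (δ / (2 * (|M| + 1))) * |M| := by
      have := abs_nonneg M
      nlinarith
    have h3 : (δ / (2 * (|M| + 1))) * |M| < δ := by
      rw [div_mul_eq_mul_div, div_lt_iff₀ (by positivity)]
      have := abs_nonneg M
      nlinarith
    linarith
  nlinarith [hεMle]
end
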